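/- arXiv:1211.3349 — 3 statements merged into one kernel-verified Lean document; each statement's English description precedes it below -/
import Mathlib

section
/- Let n ≥ 1, let α be a composition of n, and let w ∈ 𝔖_n satisfy D(w) ⊆ D(α). Then in ℤ[x_1,…,x_n] there exist finitely many exponent vectors d ∈ ℕ^n with x^d ≺ x_{D(α)} and integers c_d such that π̄_w(x_{D(α)}) = w·x_{D(α)} + ∑_d c_d x^d. (Lemma 4.1, first assertion.) -/
open MvPolynomial Finset

/-- Value of a permutation of `Fin n` as a function `ℕ → ℕ` (0 outside range). -/
def pval {n : ℕ} (w : Equiv.Perm (Fin n)) (i : ℕ) : ℕ :=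
  if h : i < n then (w ⟨i, h⟩ : ℕ) else 0

/-- 0-based descent set of `w`: `i ∈ permDes w` iff `w(i) > w(i+1)`, `0 ≤ i ≤ n-2`.
(This corresponds to the 1-based descent `i+1` of the paper.) -/
def permDes {n : ℕ} (w : Equiv.Perm (Fin n)) : Finset ℕ :=
  (Finset.range (n - 1)).filter fun i => pval w (i + 1) < pval w i

/-- Number of inversions = Coxeter length of `w`. -/
def invNum {n : ℕ} (w : Equiv.Perm (Fin n)) : ℕ :=
  (Finset.univ.filter fun p : Fin n × Fin n => p.1 < p.2 ∧ w p.2 < w p.1).card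

/-- The simple transposition `s_i = (i, i+1)` (0-based); identity if out of range. -/
def sw (n : ℕ) (i : ℕ) : Equiv.Perm (Fin n) :=
  if h : i + 1 < n then Equiv.swap ⟨i, Nat.lt_of_succ_lt h⟩ ⟨i + 1, h⟩ else 1

/-- Exponent vector of `x_I = ∏_{i ∈ I} (x_0 x_1 ⋯ x_i)`. -/
def expI (n : ℕ) (I : Finset ℕ) : Fin n → ℕ := fun j => (I.filter fun i => (j : ℕ) ≤ i).card

/-- The monomial `x_I = ∏_{i ∈ I} (x_0 x_1 ⋯ x_i)`. -/
noncomputable def xI (R : Type*) [CommRing R] (n : ℕ) (I : Finset ℕ) :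
    MvPolynomial (Fin n) R :=
  ∏ j : Fin n, (X j) ^ expI n I j

/-- `λ(d)`: the decreasing rearrangement of an exponent vector. -/
def lam {n : ℕ} (d : Fin n → ℕ) : List ℕ := (List.ofFn d).insertionSort (· ≥ ·)

/-- `x^d ≺ x^e` : `λ(d)` lexicographically smaller than `λ(e)`. -/
def monLT {n : ℕ} (d e : Fin n → ℕ) : Prop := List.Lex (· < ·) (lam d) (lam e)

/-- 0-based descent set `D(α)` of a composition `α` of `n`:
`{α_1 + ⋯ + α_j - 1 : 1 ≤ j ≤ ℓ(α) - 1}` (0-based shift of the paper's `D(α)`). -/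
def compDes {n : ℕ} (c : Composition n) : Finset ℕ :=
  (Finset.range (c.length - 1)).image fun j => c.sizeUpTo (j + 1) - 1

/-- decreasing sort of a multiset of naturals -/
noncomputable def msort (M : Multiset ℕ) : List ℕ := M.sort (· ≥ ·)

lemma msort_sorted (M : Multiset ℕ) : List.Pairwise (· ≥ ·) (msort M) :=
  Multiset.pairwise_sort M _

lemma msort_coe (M : Multiset ℕ) : (↑(msort M) : Multiset ℕ) = M := Multiset.sort_eq M _

lemma msort_eq_of_sorted {L : List ℕ} (h : List.Pairwise (· ≥ ·) L) (M : Multiset ℕ)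
    (hM : (↑L : Multiset ℕ) = M) : L = msort M := by
  apply List.Perm.eq_of_pairwise' h (msort_sorted M)
  exact Quotient.exact (hM.trans (msort_coe M).symm)

lemma msort_cons_max {M : Multiset ℕ} {a : ℕ} (h : ∀ x ∈ M, x ≤ a) :
    msort (a ::ₘ M) = a :: msort M := by
  symm
  apply msort_eq_of_sorted
  · rw [List.pairwise_cons]
    refine ⟨fun b hb => ?_, msort_sorted M⟩
    have : b ∈ M := by rw [← msort_coe M]; exact_mod_cast hb
    exact h b this
  · rw [← Multiset.cons_coe, msort_coe]

lemma exists_max (M : Multiset ℕ) (h : M ≠ 0) : ∃ m ∈ M, ∀ x ∈ M, x ≤ m := by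
  induction M using Multiset.induction with
  | empty => simp at h
  | cons a M ih =>
    rcases eq_or_ne M 0 with rfl | hM
    · exact ⟨a, by simp⟩
    · obtain ⟨m, hm, hmax⟩ := ih hM
      refine ⟨max a m, ?_, ?_⟩
      · rcases le_total a m with h' | h'
        · simp [max_eq_right h', Multiset.mem_cons_of_mem hm]
        · simp [max_eq_left h']
      · intro x hx
        rcases Multiset.mem_cons.mp hx with rfl | hx
        · exact le_max_left _ _
        · exact le_trans (hmax x hx) (le_max_right _ _)

/-- key lex comparison lemma -/
lemma msort_lex (a : ℕ) : ∀ (M s t : Multiset ℕ), (∀ x ∈ s, x < a) → (∀ x ∈ t, x ≤ a) →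
    List.Lex (· < ·) (msort (M + s)) (msort (M + (a ::ₘ t))) := by
  intro M
  induction M using Multiset.strongInductionOn with
  | ih M ih =>
  intro s t hs ht
  by_cases hbig : ∃ x ∈ M, a ≤ x
  · obtain ⟨x0, hx0, _⟩ := hbig
    obtain ⟨m, hm, hmax⟩ := exists_max M (by rintro rfl; simp at hx0)
    have hma : a ≤ m := le_trans ‹a ≤ x0› (hmax _ hx0)
    have hM : M = m ::ₘ M.erase m := (Multiset.cons_erase hm).symm
    have herase : ∀ x ∈ M.erase m, x ≤ m := fun x hx => hmax x (Multiset.mem_of_mem_erase hx)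
    have h1 : msort (M + s) = m :: msort (M.erase m + s) := by
      conv_lhs => rw [hM, Multiset.cons_add]
      exact msort_cons_max (by
        intro x hx
        rcases Multiset.mem_add.mp hx with hx | hx
        · exact herase x hx
        · exact le_trans (le_of_lt (hs x hx)) hma)
    have h2 : msort (M + (a ::ₘ t)) = m :: msort (M.erase m + (a ::ₘ t)) := by
      conv_lhs => rw [hM, Multiset.cons_add]
      exact msort_cons_max (by
        intro x hx
        rcases Multiset.mem_add.mp hx with hx | hx
        · exact herase x hx
        · rcases Multiset.mem_cons.mp hx with rfl | hx
          · exact hma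
          · exact le_trans (ht x hx) hma)
    rw [h1, h2]
    exact List.Lex.cons (ih _ (Multiset.erase_lt.mpr hm) s t hs ht)
  · push_neg at hbig
    have h2 : msort (M + (a ::ₘ t)) = a :: msort (M + t) := by
      rw [Multiset.add_cons]
      exact msort_cons_max (by
        intro x hx
        rcases Multiset.mem_add.mp hx with hx | hx
        · exact le_of_lt (hbig x hx)
        · exact ht x hx)
    rw [h2]
    rcases hL : msort (M + s) with _ | ⟨h0, tl⟩
    · exact List.Lex.nil
    · have : h0 ∈ M + s := by
        rw [← msort_coe (M + s), hL]; simp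
      have : h0 < a := by
        rcases Multiset.mem_add.mp this with hx | hx
        · exact hbig _ hx
        · exact hs _ hx
      exact List.Lex.rel this

lemma lam_eq {n : ℕ} (d : Fin n → ℕ) :
    lam d = msort (Multiset.map d Finset.univ.val) := by
  apply msort_eq_of_sorted (List.pairwise_insertionSort _ _)
  have h1 : ((List.ofFn d).insertionSort (· ≥ ·) : Multiset ℕ) = ↑(List.ofFn d) :=
    Quotient.sound (List.perm_insertionSort _ _)
  exact h1.trans (by rw [List.ofFn_eq_map, ← Multiset.map_coe, Fin.univ_def])

lemma map_perm_univ {n : ℕ} (σ : Equiv.Perm (Fin n)) :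
    Multiset.map (⇑σ) Finset.univ.val = Finset.univ.val := by
  calc Multiset.map (⇑σ) Finset.univ.val = (Finset.univ.map σ.toEmbedding).val := by
        simp [Finset.map_val]
    _ = Finset.univ.val := by rw [Finset.map_univ_equiv]

lemma lam_comp_perm {n : ℕ} (d : Fin n → ℕ) (σ : Equiv.Perm (Fin n)) :
    lam (d ∘ ⇑σ) = lam d := by
  rw [lam_eq, lam_eq]
  conv_rhs => rw [← map_perm_univ σ]
  rw [Multiset.map_map]

lemma vec_lex {n : ℕ} (e e' : Fin n → ℕ) (i j : Fin n) (hij : i ≠ j)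
    (hsame : ∀ k, k ≠ i → k ≠ j → e' k = e k)
    (h1 : e' i < e i) (h2 : e' j < e i) (h3 : e j ≤ e i) :
    List.Lex (· < ·) (lam e') (lam e) := by
  rw [lam_eq, lam_eq]
  have hi : i ∈ (univ : Finset (Fin n)).val := Finset.mem_univ_val i
  have hnd : ((univ : Finset (Fin n)).val).Nodup := Finset.univ.nodup
  have hj : j ∈ (univ : Finset (Fin n)).val.erase i := by
    rw [hnd.mem_erase_iff]
    exact ⟨hij.symm, Finset.mem_univ_val j⟩
  set rest := ((univ : Finset (Fin n)).val.erase i).erase j with hrest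
  have hsplit : (univ : Finset (Fin n)).val = i ::ₘ j ::ₘ rest := by
    rw [hrest, Multiset.cons_erase hj, Multiset.cons_erase hi]
  have hmem : ∀ k ∈ rest, k ≠ i ∧ k ≠ j := by
    intro k hk
    have h2' := (hnd.erase i).mem_erase_iff.mp hk
    have h1' := hnd.mem_erase_iff.mp (Multiset.mem_of_mem_erase hk)
    exact ⟨h1'.1, h2'.1⟩
  have hM : Multiset.map e' rest = Multiset.map e rest := by
    apply Multiset.map_congr rfl
    intro k hk
    exact hsame k (hmem k hk).1 (hmem k hk).2
  have he' : Multiset.map e' (univ : Finset (Fin n)).val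
      = Multiset.map e rest + (e' i ::ₘ {e' j}) := by
    rw [hsplit, Multiset.map_cons, Multiset.map_cons, hM, Multiset.add_cons,
      add_comm (Multiset.map e rest) {e' j}, Multiset.singleton_add]
  have he : Multiset.map e (univ : Finset (Fin n)).val
      = Multiset.map e rest + (e i ::ₘ {e j}) := by
    rw [hsplit, Multiset.map_cons, Multiset.map_cons, Multiset.add_cons,
      add_comm (Multiset.map e rest) {e j}, Multiset.singleton_add]
  rw [he, he']
  apply msort_lex
  · intro x hx
    rcases Multiset.mem_cons.mp hx with rfl | hx
    · exact h1
    · rw [Multiset.mem_singleton.mp hx]; exact h2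
  · intro x hx
    rw [Multiset.mem_singleton.mp hx]; exact h3

def invSet {n : ℕ} (w : Equiv.Perm (Fin n)) : Finset (Fin n × Fin n) :=
  Finset.univ.filter fun p : Fin n × Fin n => p.1 < p.2 ∧ w p.2 < w p.1

lemma invNum_eq {n : ℕ} (w : Equiv.Perm (Fin n)) : invNum w = (invSet w).card := rfl

lemma mem_invSet {n : ℕ} (w : Equiv.Perm (Fin n)) (p : Fin n × Fin n) :
    p ∈ invSet w ↔ p.1 < p.2 ∧ w p.2 < w p.1 := by
  simp [invSet]

lemma sw_eq {n i : ℕ} (hi : i + 1 < n) :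
    sw n i = Equiv.swap ⟨i, Nat.lt_of_succ_lt hi⟩ ⟨i + 1, hi⟩ := dif_pos hi

lemma swap_val {n i : ℕ} (hi : i + 1 < n) (x : Fin n) :
    ((Equiv.swap ⟨i, Nat.lt_of_succ_lt hi⟩ ⟨i + 1, hi⟩ x : Fin n) : ℕ)
      = if (x : ℕ) = i then i + 1 else if (x : ℕ) = i + 1 then i else x := by
  by_cases h1 : (x : ℕ) = i
  · have : x = ⟨i, Nat.lt_of_succ_lt hi⟩ := Fin.ext h1
    subst this
    rw [Equiv.swap_apply_left, if_pos h1]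
  · by_cases h2 : (x : ℕ) = i + 1
    · have : x = ⟨i + 1, hi⟩ := Fin.ext h2
      subst this
      rw [Equiv.swap_apply_right, if_neg h1, if_pos h2]
    · rw [Equiv.swap_apply_of_ne_of_ne (fun h => h1 (by rw [h])) (fun h => h2 (by rw [h])),
        if_neg h1, if_neg h2]

lemma sw_val {n i : ℕ} (hi : i + 1 < n) (x : Fin n) :
    ((sw n i x : Fin n) : ℕ)
      = if (x : ℕ) = i then i + 1 else if (x : ℕ) = i + 1 then i else x := by
  rw [sw_eq hi]; exact swap_val hi x

lemma invSet_sw_mul {n i : ℕ} (hi : i + 1 < n) (u : Equiv.Perm (Fin n)) :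
    (u.symm ⟨i, Nat.lt_of_succ_lt hi⟩ < u.symm ⟨i + 1, hi⟩ ∧
      invSet (sw n i * u) = insert (u.symm ⟨i, Nat.lt_of_succ_lt hi⟩, u.symm ⟨i + 1, hi⟩) (invSet u) ∧
      (u.symm ⟨i, Nat.lt_of_succ_lt hi⟩, u.symm ⟨i + 1, hi⟩) ∉ invSet u) ∨
    (u.symm ⟨i + 1, hi⟩ < u.symm ⟨i, Nat.lt_of_succ_lt hi⟩ ∧
      invSet (sw n i * u) = (invSet u).erase (u.symm ⟨i + 1, hi⟩, u.symm ⟨i, Nat.lt_of_succ_lt hi⟩) ∧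
      (u.symm ⟨i + 1, hi⟩, u.symm ⟨i, Nat.lt_of_succ_lt hi⟩) ∈ invSet u) := by
  set fi : Fin n := ⟨i, Nat.lt_of_succ_lt hi⟩ with hfi
  set fi1 : Fin n := ⟨i + 1, hi⟩ with hfi1
  set a0 := u.symm fi with ha0
  set b0 := u.symm fi1 with hb0
  have hfine : fi ≠ fi1 := by
    simp only [hfi, hfi1, Ne, Fin.mk.injEq]; omega
  have hane : a0 ≠ b0 := fun h => hfine (by
    have := congrArg u h
    simpa [ha0, hb0] using this)
  -- generic membership facts
  have key : ∀ p : Fin n × Fin n,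
      (p ∈ invSet (sw n i * u) ↔ p.1 < p.2 ∧
        (¬((u p.2 : ℕ) = i ∧ (u p.1 : ℕ) = i + 1)) ∧
          (((u p.1 : ℕ) = i ∧ (u p.2 : ℕ) = i + 1) ∨ (u p.2 : ℕ) < (u p.1 : ℕ))) := by
    intro p
    rw [mem_invSet]
    constructor
    · rintro ⟨h1, h2⟩
      refine ⟨h1, ?_⟩
      rw [Fin.lt_def, Equiv.Perm.mul_apply, Equiv.Perm.mul_apply, sw_val hi, sw_val hi] at h2
      constructor
      · rintro ⟨e1, e2⟩; rw [if_pos e1, if_neg (by omega), if_pos e2] at h2; omega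
      · by_cases e1 : (u p.1 : ℕ) = i
        · by_cases e2 : (u p.2 : ℕ) = i + 1
          · rw [if_pos e1, if_neg (by omega), if_pos e2] at h2; left; exact ⟨e1, e2⟩
          · right
            by_cases e3 : (u p.2 : ℕ) = i
            · exfalso
              have : p.1 = p.2 := u.injective (Fin.ext (e1.trans e3.symm))
              rw [this] at h1; exact lt_irrefl _ h1
            · rw [if_pos e1, if_neg e3, if_neg e2] at h2; omega
        · by_cases e2 : (u p.1 : ℕ) = i + 1
          · by_cases e3 : (u p.2 : ℕ) = i
            · rw [if_neg e1, if_pos e2, if_pos e3] at h2; right; omega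
            · by_cases e4 : (u p.2 : ℕ) = i + 1
              · exfalso
                have : p.1 = p.2 := u.injective (Fin.ext (e2.trans e4.symm))
                rw [this] at h1; exact lt_irrefl _ h1
              · rw [if_neg e1, if_pos e2, if_neg e3, if_neg e4] at h2; right; omega
          · rw [if_neg e1, if_neg e2] at h2
            by_cases e3 : (u p.2 : ℕ) = i
            · rw [if_pos e3] at h2; right; omega
            · by_cases e4 : (u p.2 : ℕ) = i + 1
              · rw [if_neg e3, if_pos e4] at h2; right; omega
              · rw [if_neg e3, if_neg e4] at h2; right; omega
    · rintro ⟨h1, h2, h3⟩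
      refine ⟨h1, ?_⟩
      rw [Fin.lt_def, Equiv.Perm.mul_apply, Equiv.Perm.mul_apply, sw_val hi, sw_val hi]
      have hne : (u p.1 : ℕ) ≠ (u p.2 : ℕ) := by
        intro h
        have : p.1 = p.2 := u.injective (Fin.ext h)
        rw [this] at h1; exact lt_irrefl _ h1
      split_ifs <;> omega
  have hane' : (a0 : ℕ) ≠ (b0 : ℕ) := fun h => hane (Fin.ext h)
  have gauto : ∀ p : Fin n × Fin n,
      (((u p.1 : Fin n) : ℕ) = i ↔ (p.1 : ℕ) = (a0 : ℕ)) ∧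
      (((u p.2 : Fin n) : ℕ) = i + 1 ↔ (p.2 : ℕ) = (b0 : ℕ)) ∧
      (((u p.1 : Fin n) : ℕ) = i + 1 ↔ (p.1 : ℕ) = (b0 : ℕ)) ∧
      (((u p.2 : Fin n) : ℕ) = i ↔ (p.2 : ℕ) = (a0 : ℕ)) := by
    intro p
    have t1 : ∀ x : Fin n, u x = fi ↔ x = a0 := fun x => by rw [ha0, Equiv.eq_symm_apply]
    have t2 : ∀ x : Fin n, u x = fi1 ↔ x = b0 := fun x => by rw [hb0, Equiv.eq_symm_apply]
    have v1 : ∀ x : Fin n, ((u x : Fin n) : ℕ) = i ↔ u x = fi :=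
      fun x => ⟨fun h => Fin.ext h, fun h => congrArg Fin.val h⟩
    have v2 : ∀ x : Fin n, ((u x : Fin n) : ℕ) = i + 1 ↔ u x = fi1 :=
      fun x => ⟨fun h => Fin.ext h, fun h => congrArg Fin.val h⟩
    refine ⟨?_, ?_, ?_, ?_⟩
    · rw [v1, t1, Fin.ext_iff]
    · rw [v2, t2, Fin.ext_iff]
    · rw [v2, t2, Fin.ext_iff]
    · rw [v1, t1, Fin.ext_iff]
  rcases lt_or_gt_of_ne hane with hab | hab
  · left
    have hab' : (a0 : ℕ) < (b0 : ℕ) := hab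
    refine ⟨hab, ?_, ?_⟩
    · apply Finset.ext
      intro p
      obtain ⟨g1, g2, g3, g4⟩ := gauto p
      rw [key p, Finset.mem_insert, mem_invSet, Prod.ext_iff]
      simp only [Fin.lt_def, Fin.ext_iff]
      omega
    · rw [mem_invSet]
      rintro ⟨h1, h2⟩
      simp only [ha0, hb0, Equiv.apply_symm_apply] at h2
      rw [Fin.lt_def] at h2
      simp only [hfi, hfi1] at h2
      omega
  · right
    have hab' : (b0 : ℕ) < (a0 : ℕ) := hab
    refine ⟨hab, ?_, ?_⟩
    · apply Finset.ext
      intro p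
      obtain ⟨g1, g2, g3, g4⟩ := gauto p
      rw [key p, Finset.mem_erase, mem_invSet, Ne, Prod.ext_iff]
      simp only [Fin.lt_def, Fin.ext_iff]
      omega
    · rw [mem_invSet]
      refine ⟨hab, ?_⟩
      simp only [ha0, hb0, Equiv.apply_symm_apply]
      rw [Fin.lt_def]
      simp only [hfi, hfi1]
      omega

lemma sw_apply_left {n i : ℕ} (hi : i + 1 < n) :
    sw n i ⟨i, Nat.lt_of_succ_lt hi⟩ = ⟨i + 1, hi⟩ := by
  rw [sw_eq hi]; exact Equiv.swap_apply_left _ _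

lemma sw_apply_right {n i : ℕ} (hi : i + 1 < n) :
    sw n i ⟨i + 1, hi⟩ = ⟨i, Nat.lt_of_succ_lt hi⟩ := by
  rw [sw_eq hi]; exact Equiv.swap_apply_right _ _

lemma invNum_one (n : ℕ) : invNum (1 : Equiv.Perm (Fin n)) = 0 := by
  rw [invNum_eq, Finset.card_eq_zero]
  apply Finset.eq_empty_of_forall_notMem
  intro p hp
  rw [mem_invSet] at hp
  simp only [Equiv.Perm.one_apply] at hp
  exact lt_asymm hp.1 hp.2

lemma invNum_sw_mul_le {n i : ℕ} (hi : i + 1 < n) (u : Equiv.Perm (Fin n)) :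
    invNum (sw n i * u) ≤ invNum u + 1 := by
  rcases invSet_sw_mul hi u with ⟨_, hset, _⟩ | ⟨_, hset, _⟩
  · rw [invNum_eq, hset]
    exact le_trans (Finset.card_insert_le _ _) (by rw [invNum_eq])
  · rw [invNum_eq, hset]
    exact le_trans (Finset.card_le_card (Finset.erase_subset _ _)) (by rw [← invNum_eq]; omega)

lemma invNum_prod_le {n : ℕ} (l : List ℕ) (h : ∀ i ∈ l, i + 1 < n) :
    invNum (l.map (sw n)).prod ≤ l.length := by
  induction l with
  | nil => simp [invNum_one]
  | cons i l ih =>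
    rw [List.map_cons, List.prod_cons, List.length_cons]
    have hi : i + 1 < n := h i List.mem_cons_self
    calc invNum (sw n i * (l.map (sw n)).prod) ≤ invNum (l.map (sw n)).prod + 1 :=
          invNum_sw_mul_le hi _
      _ ≤ l.length + 1 := by
          have := ih (fun j hj => h j (List.mem_cons_of_mem i hj))
          omega

lemma reduced_forcing {n i : ℕ} (hi : i + 1 < n) (u : Equiv.Perm (Fin n)) {k : ℕ}
    (hle : invNum u ≤ k) (heq : invNum (sw n i * u) = k + 1) :
    u.symm ⟨i, Nat.lt_of_succ_lt hi⟩ < u.symm ⟨i + 1, hi⟩ ∧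
      invSet u ⊆ invSet (sw n i * u) ∧ invNum u = k := by
  rcases invSet_sw_mul hi u with ⟨hlt, hset, hmem⟩ | ⟨hlt, hset, hmem⟩
  · have hcard : invNum (sw n i * u) = invNum u + 1 := by
      rw [invNum_eq, hset, Finset.card_insert_of_notMem hmem, ← invNum_eq]
    refine ⟨hlt, ?_, by omega⟩
    rw [hset]
    exact Finset.subset_insert _ _
  · exfalso
    have h1 : invNum (sw n i * u) = invNum u - 1 := by
      rw [invNum_eq, hset, Finset.card_erase_of_mem hmem, ← invNum_eq]
    have h2 : 1 ≤ invNum u := by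
      rw [invNum_eq]
      exact Finset.card_pos.mpr ⟨_, hmem⟩
    omega

lemma exists_desc {n : ℕ} (w : Equiv.Perm (Fin n)) :
    ∀ (k a b : ℕ) (ha : a < n) (hb : b < n), b = a + k + 1 →
      (w ⟨b, hb⟩ : ℕ) < (w ⟨a, ha⟩ : ℕ) →
      ∃ (c : ℕ) (hc : c + 1 < n), a ≤ c ∧ c < b ∧
        (w ⟨c + 1, hc⟩ : ℕ) < (w ⟨c, Nat.lt_of_succ_lt hc⟩ : ℕ) := by
  intro k
  induction k with
  | zero =>
    intro a b ha hb hab h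
    subst hab
    exact ⟨a, hb, le_refl a, by omega, h⟩
  | succ k ih =>
    intro a b ha hb hab h
    have ha1 : a + 1 < n := by omega
    by_cases hd : (w ⟨a + 1, ha1⟩ : ℕ) < (w ⟨a, ha⟩ : ℕ)
    · exact ⟨a, ha1, le_refl a, by omega, hd⟩
    · push_neg at hd
      have hne : (w ⟨a, ha⟩ : ℕ) ≠ (w ⟨a + 1, ha1⟩ : ℕ) := by
        intro hh
        have : (⟨a, ha⟩ : Fin n) = ⟨a + 1, ha1⟩ := w.injective (Fin.ext hh)
        have := congrArg Fin.val this
        simp at this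
      have h' : (w ⟨b, hb⟩ : ℕ) < (w ⟨a + 1, ha1⟩ : ℕ) := by omega
      obtain ⟨c, hc, hc1, hc2, hc3⟩ := ih (a + 1) b ha1 hb (by omega) h'
      exact ⟨c, hc, by omega, hc2, hc3⟩

lemma expI_antitone (n : ℕ) (D : Finset ℕ) (a b : Fin n) (h : (a : ℕ) ≤ (b : ℕ)) :
    expI n D b ≤ expI n D a := by
  apply Finset.card_le_card
  intro x hx
  rw [Finset.mem_filter] at hx ⊢
  exact ⟨hx.1, le_trans h hx.2⟩

lemma expI_strict {n : ℕ} (D : Finset ℕ) {c : ℕ} (hcD : c ∈ D) (a b : Fin n)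
    (h1 : (a : ℕ) ≤ c) (h2 : c < (b : ℕ)) : expI n D b < expI n D a := by
  apply Finset.card_lt_card
  constructor
  · intro x hx
    rw [Finset.mem_filter] at hx ⊢
    exact ⟨hx.1, by omega⟩
  · intro hsub
    have h3 : c ∈ D.filter fun i => (a : ℕ) ≤ i := Finset.mem_filter.mpr ⟨hcD, h1⟩
    have h4 := hsub h3
    rw [Finset.mem_filter] at h4
    omega

lemma mu_cond {n : ℕ} (α : Composition n) (w : Equiv.Perm (Fin n))
    (hDw : permDes w ⊆ compDes α) :
    ∀ a b : Fin n, a < b → w b < w a →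
      expI n (compDes α) b < expI n (compDes α) a := by
  intro a b hab hwba
  have hab' : (a : ℕ) < (b : ℕ) := hab
  have hwba' : (w b : ℕ) < (w a : ℕ) := hwba
  have hbn : (b : ℕ) < n := b.isLt
  obtain ⟨c, hc, hc1, hc2, hc3⟩ := exists_desc w ((b : ℕ) - (a : ℕ) - 1) a b a.isLt b.isLt
    (by omega) (by convert hwba' <;> simp)
  have hcd : c ∈ permDes w := by
    rw [permDes, Finset.mem_filter, Finset.mem_range]
    refine ⟨by omega, ?_⟩
    rw [pval, pval, dif_pos hc, dif_pos (Nat.lt_of_succ_lt hc)]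
    exact hc3
  exact expI_strict (compDes α) (hDw hcd) a b hc1 hc2

lemma sw_apply_ne {n i : ℕ} (hi : i + 1 < n) (x : Fin n)
    (h1 : x ≠ ⟨i, Nat.lt_of_succ_lt hi⟩) (h2 : x ≠ ⟨i + 1, hi⟩) : sw n i x = x := by
  rw [sw_eq hi]; exact Equiv.swap_apply_of_ne_of_ne h1 h2

lemma sw_symm {n i : ℕ} (hi : i + 1 < n) : (sw n i).symm = sw n i := by
  rw [sw_eq hi]; exact Equiv.symm_swap _ _

lemma fine {n i : ℕ} (hi : i + 1 < n) :
    (⟨i, Nat.lt_of_succ_lt hi⟩ : Fin n) ≠ ⟨i + 1, hi⟩ := by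
  intro h; have := congrArg Fin.val h; simp at this

/-- the exponent vector agreeing with `d` off `{i, i+1}` and with `j`, `d i + d (i+1) - j`
    at positions `i`, `i+1`. -/
noncomputable def Ev {n : ℕ} (i : ℕ) (hi : i + 1 < n) (d : Fin n →₀ ℕ) (j : ℕ) : Fin n →₀ ℕ :=
  (Finsupp.erase ⟨i + 1, hi⟩ (Finsupp.erase ⟨i, Nat.lt_of_succ_lt hi⟩ d))
    + Finsupp.single ⟨i, Nat.lt_of_succ_lt hi⟩ j
    + Finsupp.single ⟨i + 1, hi⟩ (d ⟨i, Nat.lt_of_succ_lt hi⟩ + d ⟨i + 1, hi⟩ - j)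

lemma Ev_apply_fi {n : ℕ} {i : ℕ} (hi : i + 1 < n) (d : Fin n →₀ ℕ) (j : ℕ) :
    Ev i hi d j ⟨i, Nat.lt_of_succ_lt hi⟩ = j := by
  simp [Ev, Finsupp.erase_ne (fine hi), Finsupp.erase_same,
    Finsupp.single_apply, (fine hi).symm, fine hi]

lemma Ev_apply_fi1 {n : ℕ} {i : ℕ} (hi : i + 1 < n) (d : Fin n →₀ ℕ) (j : ℕ) :
    Ev i hi d j ⟨i + 1, hi⟩ = d ⟨i, Nat.lt_of_succ_lt hi⟩ + d ⟨i + 1, hi⟩ - j := by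
  simp [Ev, Finsupp.erase_same, Finsupp.single_apply, fine hi]

lemma Ev_apply_ne {n : ℕ} {i : ℕ} (hi : i + 1 < n) (d : Fin n →₀ ℕ) (j : ℕ) (x : Fin n)
    (h1 : x ≠ ⟨i, Nat.lt_of_succ_lt hi⟩) (h2 : x ≠ ⟨i + 1, hi⟩) :
    Ev i hi d j x = d x := by
  simp [Ev, Finsupp.erase_ne h1, Finsupp.erase_ne h2, Finsupp.single_apply,
    Ne.symm h1, Ne.symm h2]

lemma Ev_self {n : ℕ} {i : ℕ} (hi : i + 1 < n) (d : Fin n →₀ ℕ) :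
    Ev i hi d (d ⟨i, Nat.lt_of_succ_lt hi⟩) = d := by
  ext x
  by_cases h1 : x = ⟨i, Nat.lt_of_succ_lt hi⟩
  · subst h1; rw [Ev_apply_fi]
  · by_cases h2 : x = ⟨i + 1, hi⟩
    · subst h2; rw [Ev_apply_fi1]; omega
    · rw [Ev_apply_ne hi d _ x h1 h2]

lemma monomial_Ev {n : ℕ} {i : ℕ} (hi : i + 1 < n) (d : Fin n →₀ ℕ) (j : ℕ) (r : ℤ) :
    monomial (Ev i hi d j) r
      = monomial (Finsupp.erase ⟨i + 1, hi⟩ (Finsupp.erase ⟨i, Nat.lt_of_succ_lt hi⟩ d)) r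
        * X ⟨i, Nat.lt_of_succ_lt hi⟩ ^ j
        * X ⟨i + 1, hi⟩ ^ (d ⟨i, Nat.lt_of_succ_lt hi⟩ + d ⟨i + 1, hi⟩ - j) := by
  rw [X_pow_eq_monomial, X_pow_eq_monomial, monomial_mul, monomial_mul, Ev]
  ring_nf

lemma rename_sw_monomial {n : ℕ} {i : ℕ} (hi : i + 1 < n) (d : Fin n →₀ ℕ) (r : ℤ) :
    rename (⇑(sw n i)) (monomial d r)
      = monomial (Ev i hi d (d ⟨i + 1, hi⟩)) r := by
  rw [rename_monomial]
  have hmd : Finsupp.mapDomain (⇑(sw n i)) d = Ev i hi d (d ⟨i + 1, hi⟩) := by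
    ext x
    rw [Finsupp.mapDomain_equiv_apply, sw_symm hi]
    by_cases h1 : x = ⟨i, Nat.lt_of_succ_lt hi⟩
    · subst h1; rw [Ev_apply_fi, sw_apply_left hi]
    · by_cases h2 : x = ⟨i + 1, hi⟩
      · subst h2; rw [Ev_apply_fi1, sw_apply_right hi]; omega
      · rw [Ev_apply_ne hi d _ x h1 h2, sw_apply_ne hi x h1 h2]
  rw [hmd]

lemma telescope {R : Type*} [CommRing R] (x y : R) (b a : ℕ) (h : b ≤ a) :
    (x - y) * ∑ j ∈ Finset.Icc b a, x ^ j * y ^ (a + b - j)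
      = x ^ (a + 1) * y ^ b - x ^ b * y ^ (a + 1) := by
  rw [← Finset.Ico_add_one_right_eq_Icc, Finset.sum_Ico_eq_sum_range, Finset.mul_sum]
  have step : ∀ k ∈ Finset.range (a + 1 - b),
      (x - y) * (x ^ (b + k) * y ^ (a + b - (b + k)))
        = (x ^ (b + (k + 1)) * y ^ (a + 1 - (k + 1))) - (x ^ (b + k) * y ^ (a + 1 - k)) := by
    intro k hk
    rw [Finset.mem_range] at hk
    rw [show a + b - (b + k) = a - k from by omega,
      show b + (k + 1) = (b + k) + 1 from by omega,
      show a + 1 - (k + 1) = a - k from by omega,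
      show a + 1 - k = (a - k) + 1 from by omega, pow_succ, pow_succ]
    ring
  rw [Finset.sum_congr rfl step, Finset.sum_range_sub (fun k => x ^ (b + k) * y ^ (a + 1 - k))]
  rw [show b + (a + 1 - b) = a + 1 from by omega, show a + 1 - (a + 1 - b) = b from by omega]
  simp

lemma X_sub_ne {n i : ℕ} (hi : i + 1 < n) :
    (X ⟨i, Nat.lt_of_succ_lt hi⟩ - X ⟨i + 1, hi⟩ : MvPolynomial (Fin n) ℤ) ≠ 0 := by
  apply sub_ne_zero.mpr
  intro h
  exact fine hi (MvPolynomial.X_injective h)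

section Dem
variable {n : ℕ} (dem : ℕ → MvPolynomial (Fin n) ℤ → MvPolynomial (Fin n) ℤ)
variable (hdem : ∀ (i : ℕ) (hi : i + 1 < n) (f : MvPolynomial (Fin n) ℤ),
      (X (⟨i, Nat.lt_of_succ_lt hi⟩ : Fin n) - X ⟨i + 1, hi⟩) * dem i f
        = X (⟨i, Nat.lt_of_succ_lt hi⟩ : Fin n) * f - X ⟨i + 1, hi⟩ * rename (sw n i) f)

include hdem

omit hdem in
lemma alg1 {R : Type*} [CommRing R] (x y M D Rn S : R) (a b : ℕ)
    (hd : D = M * x ^ a * y ^ b) (hr : Rn = M * x ^ b * y ^ a)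
    (htel : (x - y) * S = x ^ (a + 1) * y ^ b - x ^ b * y ^ (a + 1)) :
    x * D - y * Rn = (x - y) * (M * S) := by
  rw [hd, hr]
  linear_combination (-M) * htel

omit hdem in
lemma alg2 {R : Type*} [CommRing R] (x y M D Rn S : R) (a b : ℕ)
    (hd : D = M * x ^ a * y ^ b) (hr : Rn = M * x ^ b * y ^ a)
    (htel : (x - y) * S = x ^ b * y ^ (a + 1) - x ^ (a + 1) * y ^ b) :
    x * D - y * Rn = (x - y) * -(M * S) := by
  rw [hd, hr]
  linear_combination M * htel

omit hdem in
lemma alg0 {R : Type*} [CommRing R] (x y M D Rn : R) (a : ℕ)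
    (hd : D = M * x ^ a * y ^ (a + 1)) (hr : Rn = M * x ^ (a + 1) * y ^ a) :
    x * D - y * Rn = (x - y) * -(0 : R) := by
  rw [hd, hr, pow_succ, pow_succ]
  ring

lemma dem_mono_ge {i : ℕ} (hi : i + 1 < n) (d : Fin n →₀ ℕ) (r : ℤ)
    (hba : d ⟨i + 1, hi⟩ ≤ d ⟨i, Nat.lt_of_succ_lt hi⟩) :
    dem i (monomial d r) = ∑ j ∈ Finset.Icc (d ⟨i + 1, hi⟩) (d ⟨i, Nat.lt_of_succ_lt hi⟩),
      monomial (Ev i hi d j) r := by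
  apply mul_left_cancel₀ (X_sub_ne hi)
  rw [hdem i hi]
  have hsum : ∑ j ∈ Finset.Icc (d ⟨i + 1, hi⟩) (d ⟨i, Nat.lt_of_succ_lt hi⟩),
        monomial (Ev i hi d j) r
      = monomial (Finsupp.erase ⟨i + 1, hi⟩ (Finsupp.erase ⟨i, Nat.lt_of_succ_lt hi⟩ d)) r
        * ∑ j ∈ Finset.Icc (d ⟨i + 1, hi⟩) (d ⟨i, Nat.lt_of_succ_lt hi⟩),
            (X (⟨i, Nat.lt_of_succ_lt hi⟩ : Fin n) : MvPolynomial (Fin n) ℤ) ^ j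
            * (X (⟨i + 1, hi⟩ : Fin n) : MvPolynomial (Fin n) ℤ)
                ^ (d ⟨i, Nat.lt_of_succ_lt hi⟩ + d ⟨i + 1, hi⟩ - j) := by
    rw [Finset.mul_sum]
    exact Finset.sum_congr rfl fun j _ => by rw [monomial_Ev hi d j r]; ring
  rw [hsum]
  refine alg1 _ _ _ _ _ _ (d ⟨i, Nat.lt_of_succ_lt hi⟩) (d ⟨i + 1, hi⟩) ?_ ?_ ?_
  · conv_lhs => rw [← Ev_self hi d]
    rw [monomial_Ev hi d _ r,
      show d ⟨i, Nat.lt_of_succ_lt hi⟩ + d ⟨i + 1, hi⟩ - d ⟨i, Nat.lt_of_succ_lt hi⟩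
        = d ⟨i + 1, hi⟩ from by omega]
  · rw [rename_sw_monomial hi d r, monomial_Ev hi d _ r,
      show d ⟨i, Nat.lt_of_succ_lt hi⟩ + d ⟨i + 1, hi⟩ - d ⟨i + 1, hi⟩
        = d ⟨i, Nat.lt_of_succ_lt hi⟩ from by omega]
  · exact telescope _ _ _ _ hba

lemma dem_mono_lt {i : ℕ} (hi : i + 1 < n) (d : Fin n →₀ ℕ) (r : ℤ)
    (hab : d ⟨i, Nat.lt_of_succ_lt hi⟩ < d ⟨i + 1, hi⟩) :
    dem i (monomial d r) = -∑ j ∈ Finset.Icc (d ⟨i, Nat.lt_of_succ_lt hi⟩ + 1)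
      (d ⟨i + 1, hi⟩ - 1), monomial (Ev i hi d j) r := by
  apply mul_left_cancel₀ (X_sub_ne hi)
  rw [hdem i hi]
  have hd : monomial d r
      = monomial (Finsupp.erase ⟨i + 1, hi⟩ (Finsupp.erase ⟨i, Nat.lt_of_succ_lt hi⟩ d)) r
        * (X (⟨i, Nat.lt_of_succ_lt hi⟩ : Fin n) : MvPolynomial (Fin n) ℤ)
            ^ (d ⟨i, Nat.lt_of_succ_lt hi⟩)
        * (X (⟨i + 1, hi⟩ : Fin n) : MvPolynomial (Fin n) ℤ) ^ (d ⟨i + 1, hi⟩) := by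
    conv_lhs => rw [← Ev_self hi d]
    rw [monomial_Ev hi d _ r,
      show d ⟨i, Nat.lt_of_succ_lt hi⟩ + d ⟨i + 1, hi⟩ - d ⟨i, Nat.lt_of_succ_lt hi⟩
        = d ⟨i + 1, hi⟩ from by omega]
  have hr : rename (⇑(sw n i)) (monomial d r)
      = monomial (Finsupp.erase ⟨i + 1, hi⟩ (Finsupp.erase ⟨i, Nat.lt_of_succ_lt hi⟩ d)) r
        * (X (⟨i, Nat.lt_of_succ_lt hi⟩ : Fin n) : MvPolynomial (Fin n) ℤ)
            ^ (d ⟨i + 1, hi⟩)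
        * (X (⟨i + 1, hi⟩ : Fin n) : MvPolynomial (Fin n) ℤ)
            ^ (d ⟨i, Nat.lt_of_succ_lt hi⟩) := by
    rw [rename_sw_monomial hi d r, monomial_Ev hi d _ r,
      show d ⟨i, Nat.lt_of_succ_lt hi⟩ + d ⟨i + 1, hi⟩ - d ⟨i + 1, hi⟩
        = d ⟨i, Nat.lt_of_succ_lt hi⟩ from by omega]
  rcases eq_or_lt_of_le (Nat.succ_le_of_lt hab) with heq | hlt
  · rw [Finset.Icc_eq_empty (by omega), Finset.sum_empty]
    refine alg0 _ _
      (monomial (Finsupp.erase ⟨i + 1, hi⟩ (Finsupp.erase ⟨i, Nat.lt_of_succ_lt hi⟩ d)) r)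
      _ _ (d ⟨i, Nat.lt_of_succ_lt hi⟩) ?_ ?_
    · rw [hd, ← heq]
    · rw [hr, ← heq]
  · have hsum : ∑ j ∈ Finset.Icc (d ⟨i, Nat.lt_of_succ_lt hi⟩ + 1) (d ⟨i + 1, hi⟩ - 1),
          monomial (Ev i hi d j) r
        = monomial (Finsupp.erase ⟨i + 1, hi⟩ (Finsupp.erase ⟨i, Nat.lt_of_succ_lt hi⟩ d)) r
          * ∑ j ∈ Finset.Icc (d ⟨i, Nat.lt_of_succ_lt hi⟩ + 1) (d ⟨i + 1, hi⟩ - 1),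
              (X (⟨i, Nat.lt_of_succ_lt hi⟩ : Fin n) : MvPolynomial (Fin n) ℤ) ^ j
              * (X (⟨i + 1, hi⟩ : Fin n) : MvPolynomial (Fin n) ℤ)
                  ^ ((d ⟨i + 1, hi⟩ - 1) + (d ⟨i, Nat.lt_of_succ_lt hi⟩ + 1) - j) := by
      rw [Finset.mul_sum]
      refine Finset.sum_congr rfl fun j _ => by
        rw [monomial_Ev hi d j r,
          show d ⟨i, Nat.lt_of_succ_lt hi⟩ + d ⟨i + 1, hi⟩ - j
            = (d ⟨i + 1, hi⟩ - 1) + (d ⟨i, Nat.lt_of_succ_lt hi⟩ + 1) - j from by omega]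
        ring
    rw [hsum]
    refine alg2 _ _ _ _ _ _ (d ⟨i, Nat.lt_of_succ_lt hi⟩) (d ⟨i + 1, hi⟩) hd hr ?_
    have htel := telescope (X (⟨i, Nat.lt_of_succ_lt hi⟩ : Fin n) : MvPolynomial (Fin n) ℤ)
      (X (⟨i + 1, hi⟩ : Fin n)) (d ⟨i, Nat.lt_of_succ_lt hi⟩ + 1) (d ⟨i + 1, hi⟩ - 1)
      (by omega)
    rw [show (d ⟨i + 1, hi⟩ - 1) + 1 = d ⟨i + 1, hi⟩ from by omega] at htel
    exact htel


lemma dem_add {i : ℕ} (hi : i + 1 < n) (f g : MvPolynomial (Fin n) ℤ) :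
    dem i (f + g) = dem i f + dem i g := by
  apply mul_left_cancel₀ (X_sub_ne hi)
  rw [hdem i hi, map_add]
  linear_combination -hdem i hi f - hdem i hi g

lemma dem_sum {A : Type*} {i : ℕ} (hi : i + 1 < n) (s : Finset A)
    (F : A → MvPolynomial (Fin n) ℤ) :
    dem i (∑ x ∈ s, F x) = ∑ x ∈ s, dem i (F x) := by
  apply mul_left_cancel₀ (X_sub_ne hi)
  rw [hdem i hi, map_sum, Finset.mul_sum, Finset.mul_sum, ← Finset.sum_sub_distrib,
    Finset.mul_sum]
  exact Finset.sum_congr rfl fun x _ => (hdem i hi (F x)).symm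

omit hdem in
lemma mapDomain_sw {i : ℕ} (hi : i + 1 < n) (d : Fin n →₀ ℕ) :
    Finsupp.mapDomain (⇑(sw n i)) d = Ev i hi d (d ⟨i + 1, hi⟩) := by
  ext x
  rw [Finsupp.mapDomain_equiv_apply, sw_symm hi]
  by_cases h1 : x = ⟨i, Nat.lt_of_succ_lt hi⟩
  · subst h1; rw [Ev_apply_fi, sw_apply_left hi]
  · by_cases h2 : x = ⟨i + 1, hi⟩
    · subst h2; rw [Ev_apply_fi1, sw_apply_right hi]; omega
    · rw [Ev_apply_ne hi d _ x h1 h2, sw_apply_ne hi x h1 h2]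

omit hdem in
lemma Ev_coe_swap {i : ℕ} (hi : i + 1 < n) (d : Fin n →₀ ℕ) :
    ⇑(Ev i hi d (d ⟨i + 1, hi⟩)) = ⇑d ∘ ⇑(sw n i) := by
  funext x
  by_cases h1 : x = ⟨i, Nat.lt_of_succ_lt hi⟩
  · subst h1
    simp only [Function.comp_apply, sw_apply_left hi, Ev_apply_fi]
  · by_cases h2 : x = ⟨i + 1, hi⟩
    · subst h2
      simp only [Function.comp_apply, sw_apply_right hi, Ev_apply_fi1]
      omega
    · simp only [Function.comp_apply, sw_apply_ne hi x h1 h2, Ev_apply_ne hi d _ x h1 h2]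

omit hdem in
lemma lam_Ev_lt_ge {i : ℕ} (hi : i + 1 < n) (d : Fin n →₀ ℕ) {j : ℕ}
    (hjb : d ⟨i + 1, hi⟩ < j) (hja : j < d ⟨i, Nat.lt_of_succ_lt hi⟩) :
    List.Lex (· < ·) (lam ⇑(Ev i hi d j)) (lam ⇑d) := by
  apply vec_lex ⇑d ⇑(Ev i hi d j) ⟨i, Nat.lt_of_succ_lt hi⟩ ⟨i + 1, hi⟩ (fine hi)
  · intro k hk1 hk2
    exact Ev_apply_ne hi d j k hk1 hk2
  · rw [Ev_apply_fi]; exact hja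
  · rw [Ev_apply_fi1]; omega
  · omega

omit hdem in
lemma lam_Ev_lt_lt {i : ℕ} (hi : i + 1 < n) (d : Fin n →₀ ℕ) {j : ℕ}
    (hja : d ⟨i, Nat.lt_of_succ_lt hi⟩ < j) (hjb : j < d ⟨i + 1, hi⟩) :
    List.Lex (· < ·) (lam ⇑(Ev i hi d j)) (lam ⇑d) := by
  apply vec_lex ⇑d ⇑(Ev i hi d j) ⟨i + 1, hi⟩ ⟨i, Nat.lt_of_succ_lt hi⟩ (fine hi).symm
  · intro k hk1 hk2
    exact Ev_apply_ne hi d j k hk2 hk1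
  · rw [Ev_apply_fi1]; omega
  · rw [Ev_apply_fi]; exact hjb
  · omega

lemma support_dem_sub_mono {i : ℕ} (hi : i + 1 < n) (d : Fin n →₀ ℕ) (r : ℤ) :
    ∀ e ∈ (dem i (monomial d r) - monomial d r).support,
      lam ⇑e = lam ⇑d ∨ List.Lex (· < ·) (lam ⇑e) (lam ⇑d) := by
  intro e he
  rcases le_or_gt (d ⟨i + 1, hi⟩) (d ⟨i, Nat.lt_of_succ_lt hi⟩) with hba | hab
  · rw [dem_mono_ge dem hdem hi d r hba, ← Finset.Ico_insert_right hba,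
      Finset.sum_insert Finset.right_notMem_Ico, Ev_self, add_sub_cancel_left] at he
    obtain ⟨j, hj, hej⟩ := Finset.mem_biUnion.mp (MvPolynomial.support_sum he)
    have hej' : e = Ev i hi d j := Finset.mem_singleton.mp (support_monomial_subset hej)
    rw [Finset.mem_Ico] at hj
    subst hej'
    rcases eq_or_lt_of_le hj.1 with heq | hlt
    · left
      rw [← heq, Ev_coe_swap hi d, lam_comp_perm]
    · right
      exact lam_Ev_lt_ge hi d hlt hj.2
  · rw [dem_mono_lt dem hdem hi d r hab] at he
    rcases Finset.mem_union.mp (MvPolynomial.support_sub _ _ _ he) with h | h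
    · rw [MvPolynomial.support_neg] at h
      obtain ⟨j, hj, hej⟩ := Finset.mem_biUnion.mp (MvPolynomial.support_sum h)
      have hej' : e = Ev i hi d j := Finset.mem_singleton.mp (support_monomial_subset hej)
      rw [Finset.mem_Icc] at hj
      subst hej'
      right
      exact lam_Ev_lt_lt hi d (by omega) (by omega)
    · left
      rw [Finset.mem_singleton.mp (support_monomial_subset h)]

lemma lead_mono {i : ℕ} (hi : i + 1 < n) (ν : Fin n →₀ ℕ)
    (hlt : ν ⟨i + 1, hi⟩ < ν ⟨i, Nat.lt_of_succ_lt hi⟩) :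
    ∃ g : MvPolynomial (Fin n) ℤ, dem i (monomial ν 1) - monomial ν 1
        = monomial (Finsupp.mapDomain (⇑(sw n i)) ν) 1 + g
      ∧ ∀ e ∈ g.support, List.Lex (· < ·) (lam ⇑e) (lam ⇑ν) := by
  refine ⟨∑ j ∈ Finset.Ioo (ν ⟨i + 1, hi⟩) (ν ⟨i, Nat.lt_of_succ_lt hi⟩),
    monomial (Ev i hi ν j) 1, ?_, ?_⟩
  · rw [dem_mono_ge dem hdem hi ν 1 (le_of_lt hlt), ← Finset.Ico_insert_right (le_of_lt hlt),
      Finset.sum_insert Finset.right_notMem_Ico, Ev_self,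
      ← Finset.Ioo_insert_left hlt, Finset.sum_insert Finset.left_notMem_Ioo,
      mapDomain_sw hi ν]
    ring
  · intro e he
    obtain ⟨j, hj, hej⟩ := Finset.mem_biUnion.mp (MvPolynomial.support_sum he)
    have hej' : e = Ev i hi ν j := Finset.mem_singleton.mp (support_monomial_subset hej)
    rw [Finset.mem_Ioo] at hj
    subst hej'
    exact lam_Ev_lt_ge hi ν hj.1 hj.2

omit hdem in
lemma lex_trans {l1 l2 l3 : List ℕ} (h1 : List.Lex (· < ·) l1 l2)
    (h2 : List.Lex (· < ·) l2 l3) : List.Lex (· < ·) l1 l3 :=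
  List.lex_trans (fun h h' => lt_trans h h') h1 h2

lemma low_step {i : ℕ} (hi : i + 1 < n) (g : MvPolynomial (Fin n) ℤ) (L : List ℕ)
    (hg : ∀ d ∈ g.support, List.Lex (· < ·) (lam ⇑d) L) :
    ∀ e ∈ (dem i g - g).support, List.Lex (· < ·) (lam ⇑e) L := by
  intro e he
  have hrep : dem i g - g
      = ∑ d ∈ g.support, (dem i (monomial d (coeff d g)) - monomial d (coeff d g)) := by
    rw [Finset.sum_sub_distrib, ← dem_sum dem hdem hi, ← MvPolynomial.as_sum]
  rw [hrep] at he
  obtain ⟨d, hd, hed⟩ := Finset.mem_biUnion.mp (MvPolynomial.support_sum he)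
  rcases support_dem_sub_mono dem hdem hi d (coeff d g) e hed with h | h
  · rw [h]; exact hg d hd
  · exact lex_trans h (hg d hd)

lemma main_ind (μ : Fin n →₀ ℕ) :
    ∀ l : List ℕ, (∀ i ∈ l, i + 1 < n) →
      ∀ w' : Equiv.Perm (Fin n), (l.map (sw n)).prod = w' → l.length = invNum w' →
      (∀ a b : Fin n, a < b → w' b < w' a → μ b < μ a) →
      ∃ g : MvPolynomial (Fin n) ℤ, l.foldr (fun i f => dem i f - f) (monomial μ 1)
          = monomial (Finsupp.mapDomain ⇑w' μ) 1 + g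
        ∧ ∀ e ∈ g.support, List.Lex (· < ·) (lam ⇑e) (lam ⇑μ) := by
  intro l
  induction l with
  | nil =>
    intro _ w' hprod _ _
    have h1 : w' = 1 := by simpa using hprod.symm
    subst h1
    refine ⟨0, ?_, by simp⟩
    rw [List.foldr_nil, Equiv.Perm.coe_one, Finsupp.mapDomain_id, add_zero]
  | cons i l ih =>
    intro hval w' hprod hlen hμ
    have hi : i + 1 < n := hval i List.mem_cons_self
    set v' := (l.map (sw n)).prod with hv'
    have hw' : w' = sw n i * v' := by rw [← hprod, List.map_cons, List.prod_cons]
    have hbound : invNum v' ≤ l.length :=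
      invNum_prod_le l fun j hj => hval j (List.mem_cons_of_mem i hj)
    have hlen' : l.length + 1 = invNum w' := by simpa using hlen
    obtain ⟨hab, hsub, hlenv⟩ := reduced_forcing hi v' (k := l.length) hbound
      (by rw [← hw']; omega)
    have hμ' : ∀ a b : Fin n, a < b → v' b < v' a → μ b < μ a := by
      intro a b h1 h2
      have hmem : (a, b) ∈ invSet v' := (mem_invSet v' (a, b)).mpr ⟨h1, h2⟩
      have hmem2 := hsub hmem
      rw [mem_invSet] at hmem2
      exact hμ a b hmem2.1 (by rw [hw']; exact hmem2.2)
    obtain ⟨g', hg'eq, hg'low⟩ := ih (fun j hj => hval j (List.mem_cons_of_mem i hj)) v' rfl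
      hlenv.symm hμ'
    set ν := Finsupp.mapDomain (⇑v') μ with hν
    have hν_apply : ∀ x, ν x = μ (v'.symm x) := fun x => Finsupp.mapDomain_equiv_apply μ x
    have hord : ν ⟨i + 1, hi⟩ < ν ⟨i, Nat.lt_of_succ_lt hi⟩ := by
      rw [hν_apply, hν_apply]
      apply hμ _ _ hab
      rw [hw']
      rw [Equiv.Perm.mul_apply, Equiv.Perm.mul_apply, Equiv.apply_symm_apply,
        Equiv.apply_symm_apply, sw_apply_left hi, sw_apply_right hi]
      rw [Fin.lt_def]
      simp
    obtain ⟨g0, hg0eq, hg0low⟩ := lead_mono dem hdem hi ν hord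
    have hlamν : lam ⇑ν = lam ⇑μ := by
      have : ⇑ν = ⇑μ ∘ ⇑(v'.symm) := funext hν_apply
      rw [this]
      exact lam_comp_perm (⇑μ) v'.symm
    have hmapw : Finsupp.mapDomain (⇑w') μ = Finsupp.mapDomain (⇑(sw n i)) ν := by
      rw [hν, ← Finsupp.mapDomain_comp]
      have : ⇑w' = ⇑(sw n i) ∘ ⇑v' := by rw [hw', Equiv.Perm.coe_mul]
      rw [this]
    refine ⟨g0 + (dem i g' - g'), ?_, ?_⟩
    · rw [List.foldr_cons, hg'eq, dem_add dem hdem hi, hmapw,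
        show dem i (monomial ν 1) + dem i g' - (monomial ν 1 + g')
          = (dem i (monomial ν 1) - monomial ν 1) + (dem i g' - g') from by ring,
        hg0eq]
      ring
    · intro e he
      rcases Finset.mem_union.mp (MvPolynomial.support_add he) with h | h
      · exact hlamν ▸ hg0low e h
      · exact low_step dem hdem hi g' (lam ⇑μ) hg'low e h

end Dem

/-- **Lemma 4.1, first assertion.**
If `α ⊨ n`, `w ∈ 𝔖_n`, `D(w) ⊆ D(α)`, and `π` is the family of Demazure operators
(characterized by `(x_i - x_{i+1}) ⬝ π_i f = x_i f - x_{i+1} s_i(f)`), then for any reduced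
word `l` for `w` (so that `π̄_w = π̄_{i_1} ∘ ⋯ ∘ π̄_{i_k}`, `π̄_i = π_i - 1`), we have
`π̄_w x_{D(α)} = w ⬝ x_{D(α)} + ∑_d c_d x^d` with all `d` satisfying `x^d ≺ x_{D(α)}`. -/
theorem stmt_0 (n : ℕ) (hn : 1 ≤ n) (α : Composition n) (w : Equiv.Perm (Fin n))
    (hDw : permDes w ⊆ compDes α)
    (dem : ℕ → MvPolynomial (Fin n) ℤ → MvPolynomial (Fin n) ℤ)
    (hdem : ∀ (i : ℕ) (hi : i + 1 < n) (f : MvPolynomial (Fin n) ℤ),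
      (X (⟨i, Nat.lt_of_succ_lt hi⟩ : Fin n) - X ⟨i + 1, hi⟩) * dem i f
        = X (⟨i, Nat.lt_of_succ_lt hi⟩ : Fin n) * f - X ⟨i + 1, hi⟩ * rename (sw n i) f)
    (l : List ℕ) (hval : ∀ i ∈ l, i + 1 < n)
    (hprod : (l.map (sw n)).prod = w) (hred : l.length = invNum w) :
    ∃ g : MvPolynomial (Fin n) ℤ,
      l.foldr (fun i f => dem i f - f) (xI ℤ n (compDes α))
        = rename w (xI ℤ n (compDes α)) + g ∧
      ∀ d ∈ g.support, monLT (⇑d) (expI n (compDes α)) := by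
  set μF := Finsupp.equivFunOnFinite.symm (expI n (compDes α)) with hμF
  have hcoe : ⇑μF = expI n (compDes α) :=
    funext fun a => congrFun (Finsupp.coe_equivFunOnFinite_symm _) a
  have hxI : xI ℤ n (compDes α) = monomial μF 1 := by
    rw [MvPolynomial.monomial_eq, Finsupp.prod_fintype _ _ fun j => pow_zero _, C_1, one_mul]
    unfold xI
    exact Finset.prod_congr rfl fun j _ => by rw [hcoe]
  have hμcond : ∀ a b : Fin n, a < b → w b < w a → μF b < μF a := by
    intro a b h1 h2
    have := mu_cond α w hDw a b h1 h2
    have e1 : μF a = expI n (compDes α) a := by rw [hcoe]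
    have e2 : μF b = expI n (compDes α) b := by rw [hcoe]
    omega
  obtain ⟨g, h1, h2⟩ := main_ind dem hdem μF l hval w hprod hred hμcond
  refine ⟨g, ?_, ?_⟩
  · rw [hxI, h1, rename_monomial]
  · intro d hd
    have := h2 d hd
    rw [monLT, ← hcoe]
    exact this
end

section
/- Let n ≥ 1, let α be a composition of n, and let w ∈ 𝔖_n satisfy D(w) ⊆ D(α). If w·x_{D(α)} = u·x_{D(u)} for some u ∈ 𝔖_n (i.e. the monomial w·x_{D(α)} is a descent monomial), then u = w and D(α) = D(w). Consequently, w·x_{D(α)} is a descent monomial if and only if D(w) = D(α). (Lemma 4.1, second assertion.) -/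
open MvPolynomial

-- basics
lemma expI_anti {n : ℕ} (I : Finset ℕ) {j j' : Fin n} (h : (j : ℕ) ≤ (j' : ℕ)) :
    expI n I j' ≤ expI n I j := by
  apply Finset.card_le_card
  apply Finset.monotone_filter_right
  intro x hx
  omega

lemma expI_le {n : ℕ} {I : Finset ℕ} (hI : I ⊆ Finset.range (n - 1)) (j : Fin n) :
    expI n I j ≤ n := by
  calc (I.filter fun i => (j : ℕ) ≤ i).card ≤ I.card := Finset.card_filter_le _ _
    _ ≤ (Finset.range (n-1)).card := Finset.card_le_card hI
    _ ≤ n := by rw [Finset.card_range]; omega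

lemma expI_succ {n : ℕ} (I : Finset ℕ) {j : ℕ} (hj : j + 1 < n) :
    expI n I ⟨j, Nat.lt_of_succ_lt hj⟩
      = expI n I ⟨j + 1, hj⟩ + (if j ∈ I then 1 else 0) := by
  unfold expI
  have h1 : (I.filter fun i => j ≤ i) = (I.filter fun i => j + 1 ≤ i) ∪ (I.filter fun i => i = j) := by
    rw [← Finset.filter_or]
    apply Finset.filter_congr
    intro x _
    constructor <;> omega
  rw [h1, Finset.card_union_of_disjoint, Finset.filter_eq']
  · split <;> simp
  · simp [Finset.disjoint_filter]
    omega

lemma mem_compDes_lt {n : ℕ} (c : Composition n) {m : ℕ} (hm : m ∈ compDes c) :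
    m < n - 1 := by
  simp only [compDes, Finset.mem_image, Finset.mem_range] at hm
  obtain ⟨j, hj, rfl⟩ := hm
  have h1 : c.sizeUpTo (j+1) < c.sizeUpTo (j+2) := c.sizeUpTo_strict_mono (by omega)
  have h2 : c.sizeUpTo (j+2) ≤ n := c.sizeUpTo_le _
  have h3 : c.length ≤ n := c.length_le
  omega

lemma permDes_subset {n : ℕ} (w : Equiv.Perm (Fin n)) : permDes w ⊆ Finset.range (n - 1) :=
  Finset.filter_subset _ _

lemma mem_permDes_iff {n : ℕ} (w : Equiv.Perm (Fin n)) {m : ℕ} (hm : m + 1 < n) :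
    m ∈ permDes w ↔ (w ⟨m + 1, hm⟩ : Fin n) < w ⟨m, Nat.lt_of_succ_lt hm⟩ := by
  rw [permDes, Finset.mem_filter, Finset.mem_range]
  simp only [pval,
    dif_pos hm, dif_pos (Nat.lt_of_succ_lt hm)]
  constructor
  · rintro ⟨-, h⟩; exact_mod_cast h
  · intro h; exact ⟨by omega, by exact_mod_cast h⟩

-- if no descents of v in [a, a+d), then v increasing there
lemma pval_mono_no_descent {n : ℕ} (v : Equiv.Perm (Fin n)) :
    ∀ (d a : ℕ), a + d < n → (∀ m, a ≤ m → m < a + d → m ∉ permDes v) →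
      pval v a ≤ pval v (a + d) := by
  intro d
  induction d with
  | zero => intro a _ _; simp
  | succ d ih =>
    intro a h hnd
    have h1 : pval v a ≤ pval v (a + d) := ih a (by omega) (fun m h1 h2 => hnd m h1 (by omega))
    have h2 : a + d ∉ permDes v := hnd _ (by omega) (by omega)
    have h3 : ¬ pval v (a + d + 1) < pval v (a + d) := by
      intro hc
      exact h2 (by simp [permDes, Finset.mem_filter, Finset.mem_range]; exact ⟨by omega, hc⟩)
    have : a + (d + 1) = a + d + 1 := by omega
    rw [this]
    omega

lemma keyB {n : ℕ} (v : Equiv.Perm (Fin n)) (J : Finset ℕ) (hvJ : permDes v ⊆ J)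
    {j j' : Fin n} (h : j < j') :
    expI n J j' < expI n J j ∨ (expI n J j' = expI n J j ∧ v j < v j') := by
  have hle : expI n J j' ≤ expI n J j := expI_anti J (le_of_lt h)
  rcases lt_or_eq_of_le hle with hlt | heq
  · exact Or.inl hlt
  · right
    refine ⟨heq, ?_⟩
    -- no element of J in [j, j')
    have hnJ : ∀ m, (j : ℕ) ≤ m → m < (j' : ℕ) → m ∉ J := by
      intro m h1 h2 hm
      have hm1 : m + 1 < n := by omega
      have e1 : expI n J ⟨m+1, hm1⟩ < expI n J ⟨m, by omega⟩ := by
        rw [expI_succ J hm1, if_pos hm]; omega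
      have e2 : expI n J ⟨m, by omega⟩ ≤ expI n J j := expI_anti J (by simp; omega)
      have e3 : expI n J j' ≤ expI n J ⟨m+1, hm1⟩ := expI_anti J (by simp; omega)
      omega
    have hnd : ∀ m, (j : ℕ) ≤ m → m < (j' : ℕ) → m ∉ permDes v :=
      fun m h1 h2 hm => hnJ m h1 h2 (hvJ hm)
    have hmono := pval_mono_no_descent v ((j' : ℕ) - (j : ℕ)) j (by omega) (by
      intro m h1 h2; exact hnd m h1 (by omega))
    have hj' : (j : ℕ) + ((j' : ℕ) - (j : ℕ)) = (j' : ℕ) := by omega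
    rw [hj'] at hmono
    have hp1 : pval v j = (v j : ℕ) := by simp [pval]
    have hp2 : pval v j' = (v j' : ℕ) := by simp [pval]
    rw [hp1, hp2] at hmono
    have hne : v j ≠ v j' := fun hc => absurd (v.injective hc) (ne_of_lt h)
    have : (v j : ℕ) ≠ (v j' : ℕ) := fun hc => hne (Fin.ext hc)
    exact Fin.lt_def.mpr (by omega)

lemma rv_strictMono {n : ℕ} (E : Fin n → ℕ) (v : Equiv.Perm (Fin n)) (J : Finset ℕ)
    (hvJ : permDes v ⊆ J) (hJ : J ⊆ Finset.range (n - 1))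
    (hE : ∀ j, E (v j) = expI n J j) :
    StrictMono (fun j => n * (n - E (v j)) + ((v j : ℕ))) := by
  intro j j' h
  simp only
  rcases keyB v J hvJ h with hlt | ⟨heq, hv⟩
  · rw [hE, hE]
    have hb : expI n J j ≤ n := expI_le hJ j
    have hb' : expI n J j' ≤ n := expI_le hJ j'
    have h1 : (v j : ℕ) < n := (v j).isLt
    have h2 : (v j' : ℕ) < n := (v j').isLt
    have : n - expI n J j < n - expI n J j' := by omega
    calc n * (n - expI n J j) + (v j : ℕ) < n * (n - expI n J j) + n := by omega
      _ = n * (n - expI n J j + 1) := by ring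
      _ ≤ n * (n - expI n J j') := Nat.mul_le_mul_left n (by omega)
      _ ≤ n * (n - expI n J j') + (v j' : ℕ) := by omega
  · rw [hE, hE, heq]
    have : (v j : ℕ) < (v j' : ℕ) := hv
    omega

/-- Main uniqueness: same exponent vector forces same permutation and same set. -/
lemma uniq {n : ℕ} (v u : Equiv.Perm (Fin n)) (J K : Finset ℕ)
    (hvJ : permDes v ⊆ J) (hJ : J ⊆ Finset.range (n - 1))
    (huK : permDes u ⊆ K) (hK : K ⊆ Finset.range (n - 1))
    (hE : ∀ k : Fin n, expI n J (v⁻¹ k) = expI n K (u⁻¹ k)) :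
    u = v ∧ J = K := by
  set E : Fin n → ℕ := fun k => expI n J (v⁻¹ k) with hEdef
  have hEv : ∀ j, E (v j) = expI n J j := by intro j; simp [hEdef]
  have hEu : ∀ j, E (u j) = expI n K j := by intro j; simp only [hEdef]; rw [hE]; simp
  set r : Fin n → ℕ := fun k => n * (n - E k) + (k : ℕ) with hrdef
  have hmv : StrictMono (fun j => r (v j)) := rv_strictMono E v J hvJ hJ hEv
  have hmu : StrictMono (fun j => r (u j)) := rv_strictMono E u K huK hK hEu
  have hrinj : Function.Injective r := by
    intro a b hab
    have : v⁻¹ a = v⁻¹ b := hmv.injective (by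
      show r (v (v⁻¹ a)) = r (v (v⁻¹ b)); rw [Equiv.Perm.inv_def, Equiv.apply_symm_apply, Equiv.apply_symm_apply]; exact hab)
    calc a = v (v⁻¹ a) := (Equiv.apply_symm_apply v a).symm
      _ = v (v⁻¹ b) := by rw [this]
      _ = b := Equiv.apply_symm_apply v b
  -- both r∘v and r∘u enumerate the image of r in increasing order
  set s : Finset ℕ := Finset.image r Finset.univ with hsdef
  have hcard : s.card = n := by
    rw [hsdef, Finset.card_image_of_injective _ hrinj, Finset.card_univ, Fintype.card_fin]
  have h1 : (fun j => r (v j)) = s.orderEmbOfFin hcard :=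
    Finset.orderEmbOfFin_unique hcard (fun x => Finset.mem_image_of_mem r (Finset.mem_univ _)) hmv
  have h2 : (fun j => r (u j)) = s.orderEmbOfFin hcard :=
    Finset.orderEmbOfFin_unique hcard (fun x => Finset.mem_image_of_mem r (Finset.mem_univ _)) hmu
  have huv : u = v := by
    ext j
    have : r (u j) = r (v j) := by rw [congrFun h1 j, congrFun h2 j]
    have := hrinj this
    exact congrArg Fin.val this.symm ▸ rfl
  refine ⟨huv, ?_⟩
  -- now expI n J = expI n K pointwise
  have hJK : ∀ j : Fin n, expI n J j = expI n K j := by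
    intro j
    have := hE (v j)
    rwa [Equiv.Perm.inv_def, Equiv.symm_apply_apply, huv, Equiv.Perm.inv_def, Equiv.symm_apply_apply] at this
  ext m
  constructor
  · intro hm
    have hmr := hJ hm
    rw [Finset.mem_range] at hmr
    have hm1 : m + 1 < n := by omega
    by_contra hmK
    have e1 := expI_succ J hm1
    have e2 := expI_succ K hm1
    rw [if_pos hm] at e1
    rw [if_neg hmK] at e2
    have := hJK ⟨m, by omega⟩
    have := hJK ⟨m+1, hm1⟩
    omega
  · intro hm
    have hmr := hK hm
    rw [Finset.mem_range] at hmr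
    have hm1 : m + 1 < n := by omega
    by_contra hmJ
    have e1 := expI_succ J hm1
    have e2 := expI_succ K hm1
    rw [if_neg hmJ] at e1
    rw [if_pos hm] at e2
    have := hJK ⟨m, by omega⟩
    have := hJK ⟨m+1, hm1⟩
    omega

lemma xI_eq_monomial (n : ℕ) (I : Finset ℕ) :
    xI ℤ n I = monomial (Finsupp.equivFunOnFinite.symm (expI n I)) 1 := by
  rw [monomial_eq]
  simp only [C_1, one_mul]
  rw [Finsupp.prod_fintype]
  · apply Finset.prod_congr rfl
    intro j _
    congr 1
  · intro i; exact pow_zero _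

lemma exps_eq {n : ℕ} (w u : Equiv.Perm (Fin n)) (I K : Finset ℕ)
    (h : rename w (xI ℤ n I) = rename u (xI ℤ n K)) :
    ∀ k : Fin n, expI n I (w⁻¹ k) = expI n K (u⁻¹ k) := by
  rw [xI_eq_monomial, xI_eq_monomial, rename_monomial, rename_monomial] at h
  rw [monomial_eq_monomial_iff] at h
  rcases h with ⟨h1, -⟩ | ⟨h1, -⟩
  · intro k
    have h2 := congrArg (fun f => (f : (Fin n) →₀ ℕ) k) h1
    rwa [Finsupp.mapDomain_equiv_apply, Finsupp.mapDomain_equiv_apply,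
      Finsupp.coe_equivFunOnFinite_symm, Finsupp.coe_equivFunOnFinite_symm] at h2
  · exact absurd h1 one_ne_zero

/-- **Lemma 4.1, second assertion.**
If `D(w) ⊆ D(α)` and the monomial `w ⬝ x_{D(α)}` equals the descent monomial
`u ⬝ x_{D(u)}` of some `u ∈ 𝔖_n`, then `u = w` and `D(α) = D(w)`; consequently
`w ⬝ x_{D(α)}` is a descent monomial iff `D(w) = D(α)`. -/
theorem stmt_1 (n : ℕ) (hn : 1 ≤ n) (α : Composition n) (w : Equiv.Perm (Fin n))
    (hDw : permDes w ⊆ compDes α) :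
    (∀ u : Equiv.Perm (Fin n),
      rename w (xI ℤ n (compDes α)) = rename u (xI ℤ n (permDes u)) →
        u = w ∧ compDes α = permDes w) ∧
    ((∃ u : Equiv.Perm (Fin n),
        rename w (xI ℤ n (compDes α)) = rename u (xI ℤ n (permDes u))) ↔
      permDes w = compDes α) := by
  have hcsub : compDes α ⊆ Finset.range (n - 1) := by
    intro m hm; exact Finset.mem_range.mpr (mem_compDes_lt α hm)
  have main : ∀ u : Equiv.Perm (Fin n),
      rename w (xI ℤ n (compDes α)) = rename u (xI ℤ n (permDes u)) →
        u = w ∧ compDes α = permDes w := by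
    intro u heq
    have hE := exps_eq w u (compDes α) (permDes u) heq
    have h := uniq w u (compDes α) (permDes u) hDw hcsub
      (le_refl _) (permDes_subset u) hE
    obtain ⟨huw, hJK⟩ := h
    exact ⟨huw, by rw [hJK, huw]⟩
  refine ⟨main, ?_, ?_⟩
  · rintro ⟨u, hu⟩
    exact ((main u hu).2).symm
  · intro h
    exact ⟨w, by rw [h]⟩
end

section
/- Let d ∈ ℕ^n with P-partition decomposition d = γ(d) + μ(d). For any polynomial of the form f = x^{γ(d)} + ∑_β c_β x^β in ℤ[x_1,…,x_n], where the (finite) sum runs over β ∈ ℕ^n with x^β ≺ x^{γ(d)} and c_β ∈ ℤ, one has m_{μ(d)}·f = x^d + ∑_e b_e x^e, where the sum runs over e ∈ ℕ^n with x^e <_ts x^d and b_e ∈ ℤ. (Lemma 4.2.) -/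
open MvPolynomial

/-- `x^d <_ts x^e` : either `λ(d) <_lex λ(e)`, or `λ(d) = λ(e)` and `d <_lex e`. -/
def monLTts {n : ℕ} (d e : Fin n → ℕ) : Prop :=
  monLT d e ∨ (lam d = lam e ∧ List.Lex (· < ·) (List.ofFn d) (List.ofFn e))

/-- A function `Fin n → ℕ` as a finitely supported function. -/
noncomputable def toF {n : ℕ} (d : Fin n → ℕ) : Fin n →₀ ℕ :=
  Finsupp.equivFunOnFinite.symm d

/-- The label (from `1` to `n`) of position `p` in the exponent vector `d`, labelling the
entries of `d` from the largest to the smallest and breaking ties from left to right. -/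
def lab {n : ℕ} (d : Fin n → ℕ) (p : Fin n) : ℕ :=
  (Finset.univ.filter fun p' : Fin n => d p < d p' ∨ (d p' = d p ∧ p' ≤ p)).card

/-- The weak composition `γ(d)` of the P-partition decomposition `d = γ(d) + μ(d)`:
the entry labelled `n` receives value `0`, and if the entry labelled `t` received value `s`
then the entry labelled `t-1` receives `s` if it lies to the left of the entry labelled `t`
and `s+1` otherwise.  Equivalently, the value at the position labelled `t` is the number of
`s` with `t < s ≤ n` such that the position labelled `s-1` is strictly to the right of the
position labelled `s`. -/
def gammaFn {n : ℕ} (d : Fin n → ℕ) : Fin n → ℕ := fun p =>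
  ((Finset.Ioc (lab d p) n).filter fun s =>
    ∃ a b : Fin n, lab d a = s - 1 ∧ lab d b = s ∧ b < a).card

/-- `μ(d) = d - γ(d)` (entrywise). -/
def muFn {n : ℕ} (d : Fin n → ℕ) : Fin n → ℕ := fun p => d p - gammaFn d p

/-- The monomial symmetric polynomial `m_μ`: the sum of the distinct monomials in the
`𝔖_n`-orbit of `x^μ`. -/
noncomputable def mSym (R : Type*) [CommRing R] {n : ℕ} (μ : Fin n → ℕ) :
    MvPolynomial (Fin n) R :=
  ∑ e ∈ Finset.image (fun σ : Equiv.Perm (Fin n) => μ ∘ σ) Finset.univ,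
    monomial (toF e) 1

namespace L42
open List
abbrev sortD (l : List ℕ) : List ℕ := l.insertionSort (· ≥ ·)

lemma sortD_sorted (l : List ℕ) : (sortD l).Pairwise (· ≥ ·) := pairwise_insertionSort _ _
lemma sortD_perm (l : List ℕ) : sortD l ~ l := perm_insertionSort _ _
lemma sortD_congr {l l' : List ℕ} (h : l ~ l') : sortD l = sortD l' :=
  (fun p a b => Perm.eq_of_pairwise' a b p) ((sortD_perm l).trans (h.trans (sortD_perm l').symm))
    (sortD_sorted l) (sortD_sorted l')
lemma sortD_eq {l : List ℕ} (h : l.Pairwise (· ≥ ·)) : sortD l = l := h.insertionSort_eq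
lemma sorted_ofFn {n : ℕ} {f : Fin n → ℕ} (h : ∀ i j : Fin n, i < j → f j ≤ f i) :
    (List.ofFn f).Pairwise (· ≥ ·) := by
  rw [List.pairwise_ofFn]; exact fun i j hij => h i j hij

lemma lam_def {n : ℕ} (f : Fin n → ℕ) : lam f = sortD (List.ofFn f) := rfl

lemma lam_congr {n : ℕ} {f f' : Fin n → ℕ} (h : List.ofFn f ~ List.ofFn f') :
    lam f = lam f' := sortD_congr h

lemma lam_eq_ofFn {n : ℕ} (f : Fin n → ℕ) (σ : Equiv.Perm (Fin n))
    (h : ∀ i j : Fin n, i < j → f (σ j) ≤ f (σ i)) : lam f = List.ofFn (f ∘ σ) := by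
  have h1 : lam f = sortD (List.ofFn (f ∘ ⇑σ)) := sortD_congr (σ.ofFn_comp_perm f).symm
  have h2 : sortD (List.ofFn (f ∘ ⇑σ)) = List.ofFn (f ∘ ⇑σ) :=
    sortD_eq (sorted_ofFn fun i j hij => h i j hij)
  exact h1.trans h2

section Engine
variable {n : ℕ}

def OrdR (g : Fin n → ℕ) (p q : Fin n) : Prop := g q < g p ∨ (g p = g q ∧ p < q)

def Conc (g m : Fin n → ℕ) : Prop := ∀ p q, OrdR g p q → m q ≤ m p

lemma ordR_total {g : Fin n → ℕ} {p q : Fin n} (h : p ≠ q) : OrdR g p q ∨ OrdR g q p := by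
  unfold OrdR
  rcases lt_trichotomy (g p) (g q) with h1 | h1 | h1
  · exact Or.inr (Or.inl h1)
  · rcases lt_or_gt_of_ne h with h2 | h2
    · exact Or.inl (Or.inr ⟨h1, h2⟩)
    · exact Or.inr (Or.inr ⟨h1.symm, h2⟩)
  · exact Or.inl (Or.inl h1)

lemma ordR_asymm {g : Fin n → ℕ} {p q : Fin n} (h : OrdR g p q) : ¬ OrdR g q p := by
  rintro (h1 | ⟨h1, h2⟩) <;> rcases h with h3 | ⟨h3, h4⟩
  · omega
  · omega
  · omega
  · exact absurd h2 (not_lt.2 h4.le)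

lemma exists_sortPerm (g : Fin n → ℕ) :
    ∃ σ : Equiv.Perm (Fin n), ∀ i j : Fin n, i < j → OrdR g (σ i) (σ j) := by
  classical
  set B := Finset.univ.sup g with hB
  have hgB : ∀ p, g p ≤ B := fun p => Finset.le_sup (Finset.mem_univ p)
  set key : Fin n → ℕ ×ₗ ℕ := fun p => toLex (B - g p, (p : ℕ)) with hkey
  have hkinj : Function.Injective key := by
    intro a b hab
    have h2 := congrArg (fun x : ℕ ×ₗ ℕ => (ofLex x).2) hab
    exact Fin.ext h2
  refine ⟨Tuple.sort key, fun i j hij => ?_⟩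
  have hle : key (Tuple.sort key i) ≤ key (Tuple.sort key j) := Tuple.monotone_sort key hij.le
  have hne : key (Tuple.sort key i) ≠ key (Tuple.sort key j) := by
    intro h
    exact absurd ((Tuple.sort key).injective (hkinj h)) hij.ne
  have hlt := lt_of_le_of_ne hle hne
  rcases (Prod.Lex.lt_iff).1 hlt with h1 | ⟨h1, h2⟩
  · exact Or.inl (by have := hgB (Tuple.sort key i); have := hgB (Tuple.sort key j); change B - g (Tuple.sort key i) < B - g (Tuple.sort key j) at h1; omega)
  · exact Or.inr ⟨by have := hgB (Tuple.sort key i); have := hgB (Tuple.sort key j); change B - g (Tuple.sort key i) = B - g (Tuple.sort key j) at h1; omega,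
      by exact h2⟩

lemma conc_unique {g m e : Fin n → ℕ} (hm : Conc g m) (he : Conc g e)
    (hperm : List.ofFn e ~ List.ofFn m) : e = m := by
  obtain ⟨σ, hσ⟩ := exists_sortPerm g
  have hsort : ∀ f : Fin n → ℕ, Conc g f → (List.ofFn (f ∘ σ)).Pairwise (· ≥ ·) := fun f hf =>
    sorted_ofFn (fun i j hij => hf _ _ (hσ i j hij))
  have h1 : List.ofFn (e ∘ σ) = List.ofFn (m ∘ σ) :=
    (fun p a b => List.Perm.eq_of_pairwise' a b p)
      ((σ.ofFn_comp_perm e).trans (hperm.trans (σ.ofFn_comp_perm m).symm))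
      (hsort e he) (hsort m hm)
  have h2 : e ∘ σ = m ∘ σ := List.ofFn_injective h1
  funext p
  have h3 := congrFun h2 (σ.symm p)
  simpa using h3

end Engine
lemma ofFn_zipWith {n : ℕ} (h : ℕ → ℕ → ℕ) (f g : Fin n → ℕ) :
    List.zipWith h (List.ofFn f) (List.ofFn g) = List.ofFn (fun i => h (f i) (g i)) := by
  induction n with
  | zero => simp
  | succ m ih => simp [List.ofFn_succ, ih]

lemma lex_trans : ∀ {l1 l2 l3 : List ℕ}, List.Lex (· < ·) l1 l2 → List.Lex (· < ·) l2 l3 →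
    List.Lex (· < ·) l1 l3
  | _, _, _, .nil, .cons _ => .nil
  | _, _, _, .nil, .rel _ => .nil
  | _, _, _, .cons h, .cons h' => .cons (lex_trans h h')
  | _, _, _, .cons _, .rel h' => .rel h'
  | _, _, _, .rel h, .cons _ => .rel h
  | _, _, _, .rel h, .rel h' => .rel (h.trans h')

lemma lex_irrefl : ∀ (l : List ℕ), ¬ List.Lex (· < ·) l l
  | _, .cons h => lex_irrefl _ h
  | _, .rel h => lt_irrefl _ h

lemma lex_zipWith : ∀ {l1 l2 l3 : List ℕ}, l1.length = l3.length → l2.length = l3.length →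
    List.Lex (· < ·) l1 l2 →
    List.Lex (· < ·) (List.zipWith (· + ·) l1 l3) (List.zipWith (· + ·) l2 l3)
  | _, _, [], _, h2, .rel _ => by simp at h2
  | _, _, (c :: l3), _, _, .rel h => .rel (Nat.add_lt_add_right h c)
  | _, _, [], _, h2, .cons _ => by simp at h2
  | _, _, (c :: l3), h1, h2, .cons h =>
      .cons (lex_zipWith (by simpa using h1) (by simpa using h2) h)
  | _, _, [], _, h2, .nil => by simp at h2
  | _, _, (c :: l3), h1, _, .nil => by simp at h1

lemma lex_ofFn_firstdiff : ∀ {n : ℕ} (f f' : Fin n → ℕ) (a : Fin n),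
    (∀ i : Fin n, i < a → f i = f' i) → f a < f' a →
    List.Lex (· < ·) (List.ofFn f) (List.ofFn f') := by
  intro n
  induction n with
  | zero => exact fun f f' a => a.elim0
  | succ m ih =>
    intro f f' a hpre hlt
    rw [List.ofFn_succ, List.ofFn_succ]
    rcases Fin.eq_zero_or_eq_succ a with h0 | ⟨j, rfl⟩
    · subst h0; exact .rel hlt
    · have h0 : f 0 = f' 0 := hpre 0 (Fin.succ_pos j)
      rw [h0]
      exact .cons (ih _ _ j (fun i hi => hpre i.succ (by simpa using hi)) hlt)

lemma oi_head_ge (a : ℕ) (s : List ℕ) : ∃ b t, s.orderedInsert (· ≥ ·) a = b :: t ∧ a ≤ b := by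
  cases s with
  | nil => exact ⟨a, [], rfl, le_rfl⟩
  | cons c s' =>
    by_cases h : a ≥ c
    · exact ⟨a, c :: s', by simp [List.orderedInsert, h], le_rfl⟩
    · exact ⟨c, s'.orderedInsert (· ≥ ·) a, by simp [List.orderedInsert, h], by omega⟩

lemma oi_max {c : ℕ} {s : List ℕ} (h : ∀ z ∈ s, z ≤ c) : s.orderedInsert (· ≥ ·) c = c :: s := by
  cases s with
  | nil => rfl
  | cons e t => simp [List.orderedInsert, h e (by simp)]

lemma oi_cons_of_lt {a c : ℕ} (h : a < c) (s : List ℕ) :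
    (c :: s).orderedInsert (· ≥ ·) a = c :: s.orderedInsert (· ≥ ·) a := by
  simp only [List.orderedInsert, ge_iff_le, if_neg (by omega : ¬ c ≤ a)]

lemma oi_cons_of_ge {a c : ℕ} (h : c ≤ a) (s : List ℕ) :
    (c :: s).orderedInsert (· ≥ ·) a = a :: c :: s := by
  simp only [List.orderedInsert, ge_iff_le, if_pos h]

lemma ML_aux : ∀ (l : List ℕ), l.Pairwise (· ≥ ·) → ∀ x y u w : ℕ, x < u → y < u →
    List.Lex (· < ·)
      ((l.orderedInsert (· ≥ ·) y).orderedInsert (· ≥ ·) x)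
      ((l.orderedInsert (· ≥ ·) w).orderedInsert (· ≥ ·) u)
  | [], _, x, y, u, w, hx, hy => by
    simp only [List.orderedInsert]
    split_ifs <;> exact .rel (by omega)
  | c :: l', hs, x, y, u, w, hx, hy => by
    have hs' : l'.Pairwise (· ≥ ·) := hs.of_cons
    have hc : ∀ z ∈ l', z ≤ c := fun z hz => List.rel_of_pairwise_cons hs hz
    rcases lt_or_ge c u with hcu | huc
    · obtain ⟨b2, t2, he2, hb2⟩ := oi_head_ge u ((c :: l').orderedInsert (· ≥ ·) w)
      obtain ⟨b1, t1, he1, _⟩ := oi_head_ge x ((c :: l').orderedInsert (· ≥ ·) y)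
      have hb1m : b1 ∈ ((c :: l').orderedInsert (· ≥ ·) y).orderedInsert (· ≥ ·) x := by
        rw [he1]; exact List.mem_cons_self
      rw [he1, he2]
      refine .rel ?_
      have hble : b1 < u := by
        rcases (List.mem_orderedInsert _).1 hb1m with rfl | hb1m'
        · omega
        · rcases (List.mem_orderedInsert _).1 hb1m' with rfl | hb1m''
          · omega
          · rcases List.mem_cons.1 hb1m'' with rfl | hb1m'''
            · omega
            · have := hc _ hb1m'''; omega
      omega
    · have hxc : x < c := by omega
      have hyc : y < c := by omega
      rw [oi_cons_of_lt hyc, oi_cons_of_lt hxc]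
      have key : ∀ v : ℕ, v < c →
          (c : ℕ) :: l'.orderedInsert (· ≥ ·) v
            = (l'.orderedInsert (· ≥ ·) v).orderedInsert (· ≥ ·) c := by
        intro v hv
        refine (oi_max ?_).symm
        intro z hz
        rcases (List.mem_orderedInsert _).1 hz with rfl | hz'
        · omega
        · exact hc _ hz'
      rcases lt_or_ge w c with hwc | hcw
      · rw [oi_cons_of_lt hwc]
        rcases eq_or_lt_of_le huc with hu | huc'
        · rw [oi_cons_of_ge (by omega), hu]
          refine .cons ?_
          rw [key w hwc]
          exact ML_aux l' hs' x y c w hxc hyc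
        · rw [oi_cons_of_lt huc']
          exact .cons (ML_aux l' hs' x y u w hx hy)
      · rw [oi_cons_of_ge hcw]
        by_cases huw : w ≤ u
        · have hu : u = c := by omega
          have hw : w = c := by omega
          rw [oi_cons_of_ge (by omega), hu, hw]
          refine .cons ?_
          have h1 : (c : ℕ) :: c :: l' = (l'.orderedInsert (· ≥ ·) c).orderedInsert (· ≥ ·) c := by
            rw [oi_max hc, oi_cons_of_ge le_rfl]
          rw [h1]
          exact ML_aux l' hs' x y c c hxc hyc
        · push_neg at huw
          rw [oi_cons_of_lt huw]
          rcases eq_or_lt_of_le hcw with hcw' | hcw'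
          · have hlast : List.Lex (· < ·)
                ((l'.orderedInsert (· ≥ ·) y).orderedInsert (· ≥ ·) x)
                ((c :: l').orderedInsert (· ≥ ·) u) := by
              have huc' : u < c := by omega
              rw [oi_cons_of_lt huc', key u huc']
              exact ML_aux l' hs' x y c u hxc hyc
            rw [← hcw']
            exact .cons hlast
          · exact .rel hcw'

lemma ML {l : List ℕ} {x y u w : ℕ} (hx : x < u) (hy : y < u) :
    List.Lex (· < ·) (sortD (x :: y :: l)) (sortD (u :: w :: l)) := by
  have h1 : sortD (x :: y :: l)
      = ((sortD l).orderedInsert (· ≥ ·) y).orderedInsert (· ≥ ·) x := rfl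
  have h2 : sortD (u :: w :: l)
      = ((sortD l).orderedInsert (· ≥ ·) w).orderedInsert (· ≥ ·) u := rfl
  rw [h1, h2]
  exact ML_aux _ (sortD_sorted l) _ _ _ _ hx hy

section Engine2
variable {n : ℕ}

lemma monLTts_trans {a b c : Fin n → ℕ} (h1 : monLTts a b) (h2 : monLTts b c) : monLTts a c := by
  unfold monLTts monLT at *
  rcases h1 with h1 | ⟨e1, r1⟩ <;> rcases h2 with h2 | ⟨e2, r2⟩
  · exact Or.inl (lex_trans h1 h2)
  · exact Or.inl (by rwa [← e2])
  · exact Or.inl (by rwa [e1])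
  · exact Or.inr ⟨e1.trans e2, lex_trans r1 r2⟩

lemma monLTts_irrefl (a : Fin n → ℕ) : ¬ monLTts a a := by
  rintro (h | ⟨_, h⟩) <;> exact lex_irrefl _ h

lemma ofFn_perm_pair (v : Fin n → ℕ) {p q : Fin n} (hpq : p ≠ q) :
    List.ofFn v ~ v p :: v q :: (((List.finRange n).filter (fun r => r ≠ p ∧ r ≠ q)).map v) := by
  classical
  have hnodup : (p :: q :: (List.finRange n).filter (fun r => r ≠ p ∧ r ≠ q)).Nodup := by
    refine List.nodup_cons.2 ⟨?_, List.nodup_cons.2 ⟨?_, (List.nodup_finRange n).filter _⟩⟩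
    · simp [hpq]
    · simp
  have hidx : List.finRange n ~ p :: q :: (List.finRange n).filter (fun r => r ≠ p ∧ r ≠ q) := by
    rw [List.perm_ext_iff_of_nodup (List.nodup_finRange n) hnodup]
    intro r
    simp only [List.mem_finRange, List.mem_cons, List.mem_filter, true_iff, true_and,
      decide_eq_true_eq]
    by_cases h1 : r = p
    · exact Or.inl h1
    · by_cases h2 : r = q
      · exact Or.inr (Or.inl h2)
      · exact Or.inr (Or.inr (by simp [h1, h2]))
  calc List.ofFn v = (List.finRange n).map v := List.ofFn_eq_map
  _ ~ _ := hidx.map v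

lemma swap_step {g e : Fin n → ℕ} {p q : Fin n} (hOrd : OrdR g p q) (hlt : e p < e q) :
    monLTts (fun r => g r + e r) (fun r => g r + e (Equiv.swap p q r)) := by
  classical
  have hpq : p ≠ q := by
    rcases hOrd with h | ⟨_, h⟩
    · intro h'; rw [h'] at h; omega
    · exact h.ne
  set v : Fin n → ℕ := fun r => g r + e r with hv
  set v' : Fin n → ℕ := fun r => g r + e (Equiv.swap p q r) with hv'
  have hswap_p : Equiv.swap p q p = q := Equiv.swap_apply_left p q
  have hswap_q : Equiv.swap p q q = p := Equiv.swap_apply_right p q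
  have hswap_other : ∀ r, r ≠ p → r ≠ q → Equiv.swap p q r = r := fun r h1 h2 =>
    Equiv.swap_apply_of_ne_of_ne h1 h2
  have hvp : v p = g p + e p := rfl
  have hvq : v q = g q + e q := rfl
  have hv'p : v' p = g p + e q := by rw [hv']; simp [hswap_p]
  have hv'q : v' q = g q + e p := by rw [hv']; simp [hswap_q]
  have hrest : ((List.finRange n).filter (fun r => r ≠ p ∧ r ≠ q)).map v
      = ((List.finRange n).filter (fun r => r ≠ p ∧ r ≠ q)).map v' := by
    apply List.map_congr_left
    intro r hr
    rw [List.mem_filter] at hr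
    have h := hr.2
    simp only [decide_eq_true_eq] at h
    show v r = v' r
    rw [hv, hv']
    simp [hswap_other r h.1 h.2]
  rcases hOrd with hgt | ⟨heq, hlt2⟩
  · left
    unfold monLT
    rw [lam_def, lam_def, sortD_congr (ofFn_perm_pair v hpq),
      sortD_congr (ofFn_perm_pair v' hpq), ← hrest]
    apply ML
    · rw [hvp, hv'p]; omega
    · rw [hvq, hv'p]; omega
  · right
    constructor
    · have hcomp : v' = v ∘ (Equiv.swap p q) := by
        funext r
        show g r + e (Equiv.swap p q r) = g (Equiv.swap p q r) + e (Equiv.swap p q r)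
        congr 1
        rcases eq_or_ne r p with rfl | h1
        · rw [hswap_p, heq]
        · rcases eq_or_ne r q with rfl | h2
          · rw [hswap_q, heq]
          · rw [hswap_other r h1 h2]
      have hperm : List.ofFn v' ~ List.ofFn v := by
        rw [hcomp]; exact (Equiv.swap p q).ofFn_comp_perm v
      exact (lam_congr hperm).symm
    · apply lex_ofFn_firstdiff v v' p
      · intro i hi
        have h1 : i ≠ p := ne_of_lt hi
        have h2 : i ≠ q := ne_of_lt (hi.trans hlt2)
        show g i + e i = g i + e (Equiv.swap p q i)
        rw [hswap_other i h1 h2]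
      · rw [hvp, hv'p]; omega

lemma engine {g m : Fin n → ℕ} (hm : Conc g m) (σ : Equiv.Perm (Fin n)) :
    (fun r => m (σ r)) = m ∨
      monLTts (fun r => g r + m (σ r)) (fun r => g r + m r) := by
  classical
  set W : Finset (Fin n → ℕ) :=
    Finset.image (fun τ : Equiv.Perm (Fin n) => fun r => g r + m (τ r)) Finset.univ with hW
  suffices H : ∀ k (σ : Equiv.Perm (Fin n)),
      (W.filter (fun w => monLTts (fun r => g r + m (σ r)) w)).card < k →
      ((fun r => m (σ r)) = m ∨
        monLTts (fun r => g r + m (σ r)) (fun r => g r + m r)) from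
    H _ σ (Nat.lt_succ_self _)
  intro k
  induction k with
  | zero => exact fun σ h => absurd h (by omega)
  | succ k ih =>
    intro σ hk
    by_cases he : (fun r => m (σ r)) = m
    · exact Or.inl he
    right
    have hne : ¬ Conc g (fun r => m (σ r)) := by
      intro hc
      exact he (conc_unique hm hc (σ.ofFn_comp_perm m))
    unfold Conc at hne
    push_neg at hne
    obtain ⟨p, q, hOrd, hlt⟩ := hne
    have hstep := swap_step (g := g) (e := fun r => m (σ r)) hOrd hlt
    set σ' : Equiv.Perm (Fin n) := (Equiv.swap p q).trans σ with hσ'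
    have hv' : (fun r => g r + m (σ (Equiv.swap p q r))) = fun r => g r + m (σ' r) := rfl
    rw [hv'] at hstep
    have hmem : (fun r => g r + m (σ' r)) ∈ W :=
      Finset.mem_image.2 ⟨σ', Finset.mem_univ _, rfl⟩
    have hssub : (W.filter (fun w => monLTts (fun r => g r + m (σ' r)) w)) ⊂
        (W.filter (fun w => monLTts (fun r => g r + m (σ r)) w)) := by
      constructor
      · intro w hw
        rw [Finset.mem_filter] at hw ⊢
        exact ⟨hw.1, monLTts_trans hstep hw.2⟩
      · intro hsub
        have h1 : (fun r => g r + m (σ' r)) ∈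
            W.filter (fun w => monLTts (fun r => g r + m (σ r)) w) :=
          Finset.mem_filter.2 ⟨hmem, hstep⟩
        exact monLTts_irrefl _ (Finset.mem_filter.1 (hsub h1)).2
    have hcard := Finset.card_lt_card hssub
    rcases ih σ' (by omega) with h | h
    · have heq2 : (fun r => g r + m (σ' r)) = fun r => g r + m r := by
        funext r; rw [congrFun h r]
      rw [heq2] at hstep
      exact hstep
    · exact monLTts_trans hstep h

end Engine2
noncomputable def keyd (d : Fin n → ℕ) : Fin n → ℕ ×ₗ ℕ :=
  fun p => toLex (Finset.univ.sup d - d p, (p : ℕ))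

noncomputable def tau (d : Fin n → ℕ) : Equiv.Perm (Fin n) := Tuple.sort (keyd d)

def desc (d : Fin n → ℕ) (s : ℕ) : Prop :=
  ∃ a b : Fin n, lab d a = s - 1 ∧ lab d b = s ∧ b < a

def Dc (d : Fin n → ℕ) (t : ℕ) : ℕ :=
  ((Finset.Ioc t n).filter fun s => ∃ a b : Fin n, lab d a = s - 1 ∧ lab d b = s ∧ b < a).card

variable (d : Fin n → ℕ)

lemma gammaFn_eq_Dc (p : Fin n) : gammaFn d p = Dc d (lab d p) := rfl

lemma keyd_le_iff (p' p : Fin n) :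
    keyd d p' ≤ keyd d p ↔ (d p < d p' ∨ (d p' = d p ∧ p' ≤ p)) := by
  have h1 : d p ≤ Finset.univ.sup d := Finset.le_sup (Finset.mem_univ p)
  have h2 : d p' ≤ Finset.univ.sup d := Finset.le_sup (Finset.mem_univ p')
  unfold keyd
  rw [Prod.Lex.le_iff]
  constructor
  · rintro (h | ⟨h3, h4⟩)
    · exact Or.inl (by simp only [ofLex_toLex] at h; omega)
    · refine Or.inr ⟨by simp only [ofLex_toLex] at h3; omega, Fin.le_def.2 (by simpa using h4)⟩
  · rintro (h | ⟨h3, h4⟩)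
    · exact Or.inl (by simp only [ofLex_toLex]; omega)
    · exact Or.inr ⟨by simp only [ofLex_toLex]; omega, by simpa using Fin.le_def.1 h4⟩

lemma keyd_lt_iff (p' p : Fin n) :
    keyd d p' < keyd d p ↔ (d p < d p' ∨ (d p' = d p ∧ p' < p)) := by
  have h1 : d p ≤ Finset.univ.sup d := Finset.le_sup (Finset.mem_univ p)
  have h2 : d p' ≤ Finset.univ.sup d := Finset.le_sup (Finset.mem_univ p')
  unfold keyd
  rw [Prod.Lex.lt_iff]
  constructor
  · rintro (h | ⟨h3, h4⟩)
    · exact Or.inl (by simp only [ofLex_toLex] at h; omega)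
    · refine Or.inr ⟨by simp only [ofLex_toLex] at h3; omega, Fin.lt_def.2 (by simpa using h4)⟩
  · rintro (h | ⟨h3, h4⟩)
    · exact Or.inl (by simp only [ofLex_toLex]; omega)
    · exact Or.inr ⟨by simp only [ofLex_toLex]; omega, by simpa using Fin.lt_def.1 h4⟩

lemma keyd_injective : Function.Injective (keyd d) := by
  intro a b hab
  have h2 := congrArg (fun x : ℕ ×ₗ ℕ => (ofLex x).2) hab
  exact Fin.ext h2

lemma keyd_tau_strictMono : StrictMono (keyd d ∘ tau d) := by
  intro i j hij
  have hle : keyd d (tau d i) ≤ keyd d (tau d j) := Tuple.monotone_sort (keyd d) hij.le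
  refine lt_of_le_of_ne hle (fun h => ?_)
  exact absurd ((tau d).injective (keyd_injective d h)) hij.ne

lemma lab_eq_card (p : Fin n) :
    lab d p = (Finset.univ.filter fun p' => keyd d p' ≤ keyd d p).card := by
  unfold lab
  congr 1
  apply Finset.filter_congr
  intro p' _
  simp [keyd_le_iff]

lemma lab_tau (i : Fin n) : lab d (tau d i) = (i : ℕ) + 1 := by
  classical
  rw [lab_eq_card]
  have himg : (Finset.univ.filter fun p' => keyd d p' ≤ keyd d (tau d i))
      = Finset.image (tau d) (Finset.univ.filter fun j => j ≤ i) := by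
    ext p'
    simp only [Finset.mem_filter, Finset.mem_univ, true_and, Finset.mem_image]
    constructor
    · intro h
      refine ⟨(tau d).symm p', ?_, by simp⟩
      by_contra hgt
      push_neg at hgt
      have := keyd_tau_strictMono d hgt
      simp only [Function.comp_apply, Equiv.apply_symm_apply] at this
      exact absurd (lt_of_le_of_lt h this) (lt_irrefl _)
    · rintro ⟨j, hj, rfl⟩
      rcases eq_or_lt_of_le hj with rfl | hlt
      · exact le_rfl
      · exact (keyd_tau_strictMono d hlt).le
  rw [himg, Finset.card_image_of_injective _ (tau d).injective]
  have : (Finset.univ.filter fun j : Fin n => j ≤ i) = Finset.Iic i := by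
    ext j; simp
  rw [this, Fin.card_Iic]

lemma lab_symm (p : Fin n) : lab d p = ((tau d).symm p : ℕ) + 1 := by
  conv_lhs => rw [← (tau d).apply_symm_apply p]
  rw [lab_tau]

lemma lab_injective {a b : Fin n} (h : lab d a = lab d b) : a = b := by
  rw [lab_symm, lab_symm] at h
  have : (tau d).symm a = (tau d).symm b := Fin.ext (by omega)
  exact (tau d).symm.injective this

lemma desc_range {s : ℕ} (h : desc d s) : 2 ≤ s ∧ s ≤ n := by
  obtain ⟨a, b, ha, hb, _⟩ := h
  have h1 := lab_symm d a
  have h2 := lab_symm d b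
  have h3 : ((tau d).symm b : ℕ) < n := ((tau d).symm b).isLt
  constructor
  · omega
  · omega

lemma desc_iff {i : ℕ} (h1 : i + 1 < n) :
    desc d (i + 2) ↔ tau d ⟨i + 1, h1⟩ < tau d ⟨i, by omega⟩ := by
  have hlabi : lab d (tau d ⟨i, (by omega : i < n)⟩) = i + 1 := lab_tau d _
  have hlabi1 : lab d (tau d ⟨i + 1, h1⟩) = i + 2 := lab_tau d _
  constructor
  · rintro ⟨a, b, ha, hb, hba⟩
    have ha' : a = tau d ⟨i, by omega⟩ := lab_injective d (by rw [ha, hlabi]; omega)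
    have hb' : b = tau d ⟨i + 1, h1⟩ := lab_injective d (by rw [hb, hlabi1])
    rw [← ha', ← hb']
    exact hba
  · intro h
    exact ⟨tau d ⟨i, by omega⟩, tau d ⟨i + 1, h1⟩, by rw [hlabi]; omega, by rw [hlabi1], h⟩

lemma d_tau_le {i j : Fin n} (hij : i < j) : d (tau d j) ≤ d (tau d i) := by
  have := keyd_tau_strictMono d hij
  rcases (keyd_lt_iff d _ _).1 this with h | ⟨h, _⟩
  · omega
  · omega

lemma d_tau_lt_of_desc {i : ℕ} (h1 : i + 1 < n) (h : desc d (i + 2)) :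
    d (tau d ⟨i + 1, h1⟩) < d (tau d ⟨i, by omega⟩) := by
  have hpos := (desc_iff d h1).1 h
  have hkey := keyd_tau_strictMono d (show (⟨i, by omega⟩ : Fin n) < ⟨i + 1, h1⟩ from
    Fin.mk_lt_mk.2 (by omega))
  rcases (keyd_lt_iff d _ _).1 hkey with h' | ⟨h', hlt⟩
  · omega
  · exact absurd hlt (not_lt.2 hpos.le)

lemma tau_lt_of_not_desc {i : ℕ} (h1 : i + 1 < n) (h : ¬ desc d (i + 2)) :
    tau d ⟨i, by omega⟩ < tau d ⟨i + 1, h1⟩ := by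
  have hne : tau d ⟨i, by omega⟩ ≠ tau d ⟨i + 1, h1⟩ :=
    fun hh => by
      have := (tau d).injective hh
      simp only [Fin.mk.injEq] at this
      omega
  rcases lt_or_gt_of_ne hne with h' | h'
  · exact h'
  · exact absurd ((desc_iff d h1).2 h') h

lemma Dc_n : Dc d n = 0 := by
  unfold Dc
  simp

lemma Dc_anti {t t' : ℕ} (h : t ≤ t') : Dc d t' ≤ Dc d t := by
  unfold Dc
  apply Finset.card_le_card
  apply Finset.filter_subset_filter
  exact Finset.Ioc_subset_Ioc_left h

lemma Ioc_insert {t : ℕ} (h : t < n) :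
    Finset.Ioc t n = insert (t + 1) (Finset.Ioc (t + 1) n) := by
  ext s
  simp only [Finset.mem_Ioc, Finset.mem_insert]
  omega

lemma Dc_succ_desc {t : ℕ} (h : t < n) (hd : desc d (t + 1)) :
    Dc d t = Dc d (t + 1) + 1 := by
  unfold Dc
  rw [Ioc_insert h, Finset.filter_insert, if_pos (by exact hd)]
  rw [Finset.card_insert_of_notMem (by simp [Finset.mem_filter])]

lemma Dc_succ_not {t : ℕ} (h : t < n) (hd : ¬ desc d (t + 1)) :
    Dc d t = Dc d (t + 1) := by
  unfold Dc
  rw [Ioc_insert h, Finset.filter_insert, if_neg (by exact hd)]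

lemma G1aux : ∀ k : ℕ, ∀ i : Fin n, n ≤ (i : ℕ) + 1 + k → Dc d ((i : ℕ) + 1) ≤ d (tau d i) := by
  intro k
  induction k with
  | zero =>
    intro i hi
    have : (i : ℕ) + 1 = n := by have := i.isLt; omega
    rw [this, Dc_n]
    omega
  | succ k ih =>
    intro i hi
    by_cases hc : n ≤ (i : ℕ) + 1 + k
    · exact ih i hc
    push_neg at hc
    have h1 : (i : ℕ) + 1 < n := by omega
    set i' : Fin n := ⟨(i : ℕ) + 1, h1⟩ with hi'
    have hIH : Dc d ((i : ℕ) + 2) ≤ d (tau d i') := by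
      have := ih i' (by simp only [hi']; omega)
      simpa [hi'] using this
    by_cases hd : desc d ((i : ℕ) + 2)
    · have hlt : d (tau d i') < d (tau d i) := by
        have := d_tau_lt_of_desc d h1 hd
        have hii : (⟨(i : ℕ), by omega⟩ : Fin n) = i := Fin.ext rfl
        rwa [hii] at this
      have hsucc : Dc d ((i : ℕ) + 1) = Dc d ((i : ℕ) + 2) + 1 :=
        Dc_succ_desc d (show (i : ℕ) + 1 < n from h1) hd
      omega
    · have hle : d (tau d i') ≤ d (tau d i) := by
        apply d_tau_le
        rw [Fin.lt_def]
        simp [hi']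
      have hsucc : Dc d ((i : ℕ) + 1) = Dc d ((i : ℕ) + 2) :=
        Dc_succ_not d (show (i : ℕ) + 1 < n from h1) hd
      omega

lemma gam_le (p : Fin n) : gammaFn d p ≤ d p := by
  rw [gammaFn_eq_Dc, lab_symm]
  have := G1aux d (n - ((tau d).symm p : ℕ)) ((tau d).symm p) (by omega)
  simpa using this

lemma gam_add_mu (p : Fin n) : gammaFn d p + muFn d p = d p := by
  have := gam_le d p
  unfold muFn
  omega

lemma mu_step {i : ℕ} (h1 : i + 1 < n) :
    muFn d (tau d ⟨i + 1, h1⟩) ≤ muFn d (tau d ⟨i, by omega⟩) := by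
  set i0 : Fin n := ⟨i, by omega⟩
  set i1 : Fin n := ⟨i + 1, h1⟩
  have hmu0 : muFn d (tau d i0) = d (tau d i0) - Dc d (i + 1) := by
    unfold muFn
    rw [gammaFn_eq_Dc, lab_symm]
    simp [i0]
  have hmu1 : muFn d (tau d i1) = d (tau d i1) - Dc d (i + 2) := by
    unfold muFn
    rw [gammaFn_eq_Dc, lab_symm]
    simp [i1]
  have hG0 : Dc d (i + 1) ≤ d (tau d i0) := by
    have := G1aux d (n - i - 1) i0 (by simp [i0]; omega)
    simpa [i0] using this
  have hG1 : Dc d (i + 2) ≤ d (tau d i1) := by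
    have := G1aux d (n - i - 2) i1 (by simp [i1]; omega)
    simpa [i1] using this
  by_cases hd : desc d (i + 2)
  · have hlt : d (tau d i1) < d (tau d i0) := d_tau_lt_of_desc d h1 hd
    have hsucc : Dc d (i + 1) = Dc d (i + 2) + 1 :=
      Dc_succ_desc d (show i + 1 < n from h1) hd
    omega
  · have hle : d (tau d i1) ≤ d (tau d i0) := d_tau_le d (by rw [Fin.lt_def]; simp [i0, i1])
    have hsucc : Dc d (i + 1) = Dc d (i + 2) :=
      Dc_succ_not d (show i + 1 < n from h1) hd
    omega

lemma mu_tau_anti : ∀ i j : Fin n, i ≤ j → muFn d (tau d j) ≤ muFn d (tau d i) := by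
  suffices H : ∀ k : ℕ, ∀ i j : Fin n, (j : ℕ) = (i : ℕ) + k →
      muFn d (tau d j) ≤ muFn d (tau d i) by
    intro i j hij
    exact H ((j : ℕ) - (i : ℕ)) i j (by omega)
  intro k
  induction k with
  | zero =>
    intro i j hij
    have : j = i := Fin.ext (by omega)
    rw [this]
  | succ k ih =>
    intro i j hij
    have hk : (i : ℕ) + k < n := by have := j.isLt; omega
    have h1 : (i : ℕ) + k + 1 < n := by have := j.isLt; omega
    have hstep := mu_step d (show (i : ℕ) + k + 1 < n from h1)
    have hj : j = ⟨(i : ℕ) + k + 1, h1⟩ := Fin.ext (by simp; omega)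
    rw [hj]
    exact le_trans hstep (ih i ⟨(i : ℕ) + k, hk⟩ rfl)

lemma Dc_tau_anti {i j : Fin n} (hij : i ≤ j) : Dc d ((j : ℕ) + 1) ≤ Dc d ((i : ℕ) + 1) :=
  Dc_anti d (by omega)

lemma tau_mono_block : ∀ k : ℕ, ∀ i j : Fin n, (j : ℕ) = (i : ℕ) + k →
    Dc d ((i : ℕ) + 1) = Dc d ((j : ℕ) + 1) → tau d i ≤ tau d j := by
  intro k
  induction k with
  | zero =>
    intro i j hij _
    have : j = i := Fin.ext (by omega)
    rw [this]
  | succ k ih =>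
    intro i j hij hDc
    have hk : (i : ℕ) + k < n := by have := j.isLt; omega
    have h1 : (i : ℕ) + k + 1 < n := by have := j.isLt; omega
    have e1 : Dc d ((j : ℕ) + 1) = Dc d ((i : ℕ) + k + 2) := congrArg (Dc d) (by omega)
    have hsand1 : Dc d ((i : ℕ) + k + 2) ≤ Dc d ((i : ℕ) + k + 1) := Dc_anti d (by omega)
    have hsand2 : Dc d ((i : ℕ) + k + 1) ≤ Dc d ((i : ℕ) + 1) := Dc_anti d (by omega)
    have hnd : ¬ desc d ((i : ℕ) + k + 2) := by
      intro hd
      have hds := Dc_succ_desc d (show (i : ℕ) + k + 1 < n from h1) hd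
      have e2 : Dc d ((i : ℕ) + k + 1 + 1) = Dc d ((i : ℕ) + k + 2) := congrArg (Dc d) (by omega)
      omega
    have hstep := tau_lt_of_not_desc d h1 hnd
    have hj : j = ⟨(i : ℕ) + k + 1, h1⟩ := Fin.ext (by simp; omega)
    have hih : tau d i ≤ tau d ⟨(i : ℕ) + k, hk⟩ := by
      apply ih i ⟨(i : ℕ) + k, hk⟩ rfl
      have e3 : Dc d (((⟨(i : ℕ) + k, hk⟩ : Fin n) : ℕ) + 1) = Dc d ((i : ℕ) + k + 1) := rfl
      omega
    refine le_trans hih ?_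
    rw [hj]
    have hii : (⟨(i : ℕ) + k, by omega⟩ : Fin n) = ⟨(i : ℕ) + k, hk⟩ := rfl
    exact le_of_lt (hii ▸ hstep)


section Final
variable (d : Fin n → ℕ)

lemma ordR_ne {g : Fin n → ℕ} {p q : Fin n} (h : OrdR g p q) : p ≠ q := by
  rintro rfl
  rcases h with h | ⟨_, h⟩
  · omega
  · exact lt_irrefl _ h

lemma ordR_ge {g : Fin n → ℕ} {p q : Fin n} (h : OrdR g p q) : g q ≤ g p := by
  rcases h with h | ⟨h, _⟩
  · omega
  · omega

lemma gamma_symm (p : Fin n) : gammaFn d p = Dc d (((tau d).symm p : ℕ) + 1) := by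
  rw [gammaFn_eq_Dc, lab_symm]

lemma OrdR_to_index {p q : Fin n} (h : OrdR (gammaFn d) p q) :
    (tau d).symm p < (tau d).symm q := by
  have hp := gamma_symm d p
  have hq := gamma_symm d q
  have hne : (tau d).symm p ≠ (tau d).symm q :=
    fun hh => ordR_ne h ((tau d).symm.injective hh)
  rcases h with h1 | ⟨h1, h2⟩
  · by_contra hle
    push_neg at hle
    have := Dc_anti d (show ((tau d).symm q : ℕ) + 1 ≤ ((tau d).symm p : ℕ) + 1 by
      have := Fin.le_def.1 hle; omega)
    omega
  · rcases lt_or_gt_of_ne hne with h' | h'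
    · exact h'
    · exfalso
      have hblock := tau_mono_block d (((tau d).symm p : ℕ) - ((tau d).symm q : ℕ))
        ((tau d).symm q) ((tau d).symm p) (by have := Fin.lt_def.1 h'; omega) (by omega)
      simp only [Equiv.apply_symm_apply] at hblock
      exact absurd h2 (not_lt.2 hblock)

lemma conc_gamma_mu : Conc (gammaFn d) (muFn d) := by
  intro p q h
  have hij := OrdR_to_index d h
  have := mu_tau_anti d _ _ hij.le
  simpa using this

lemma gam_tau (i : Fin n) : gammaFn d (tau d i) = Dc d ((i : ℕ) + 1) := by
  rw [gammaFn_eq_Dc, lab_tau]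

lemma gam_tau_anti {i j : Fin n} (hij : i ≤ j) :
    gammaFn d (tau d j) ≤ gammaFn d (tau d i) := by
  rw [gam_tau, gam_tau]
  exact Dc_anti d (by have := Fin.le_def.1 hij; omega)

lemma d_tau_anti {i j : Fin n} (hij : i ≤ j) : d (tau d j) ≤ d (tau d i) := by
  rcases eq_or_lt_of_le hij with rfl | h
  · exact le_rfl
  · exact d_tau_le d h

lemma lam_gamma_eq : lam (gammaFn d) = List.ofFn (gammaFn d ∘ tau d) :=
  lam_eq_ofFn _ _ (fun i j hij => gam_tau_anti d hij.le)

lemma lam_mu_eq : lam (muFn d) = List.ofFn (muFn d ∘ tau d) :=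
  lam_eq_ofFn _ _ (fun i j hij => mu_tau_anti d i j hij.le)

lemma lam_d_eq : lam d = List.ofFn (d ∘ tau d) :=
  lam_eq_ofFn _ _ (fun i j hij => d_tau_anti d hij.le)

lemma lam_d_zip :
    lam d = List.zipWith (· + ·) (lam (gammaFn d)) (lam (muFn d)) := by
  rw [lam_gamma_eq, lam_mu_eq, lam_d_eq, ofFn_zipWith]
  congr 1
  funext i
  exact (gam_add_mu d (tau d i)).symm

lemma lam_length (f : Fin n → ℕ) : (lam f).length = n := by
  unfold lam
  rw [List.length_insertionSort, List.length_ofFn]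

lemma cross_lemma {β : Fin n → ℕ} (hβ : monLT β (gammaFn d)) (σ' : Equiv.Perm (Fin n)) :
    monLT (fun r => β r + muFn d (σ' r)) d := by
  classical
  obtain ⟨σβ, hσβ⟩ := exists_sortPerm β
  set ms : Fin n → ℕ := fun p => muFn d (tau d (σβ.symm p)) with hms
  have hconc : Conc β ms := by
    intro p q h
    have hne : σβ.symm p ≠ σβ.symm q := fun hh => ordR_ne h (σβ.symm.injective hh)
    have hij : σβ.symm p < σβ.symm q := by
      rcases lt_or_gt_of_ne hne with h' | h'
      · exact h'
      · exfalso
        have h2 := hσβ _ _ h'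
        simp only [Equiv.apply_symm_apply] at h2
        exact ordR_asymm h h2
    rw [hms]
    exact mu_tau_anti d _ _ hij.le
  set π : Equiv.Perm (Fin n) := σ'.trans ((tau d).symm.trans σβ) with hπ
  have heπ : (fun r => ms (π r)) = fun r => muFn d (σ' r) := by
    funext r
    rw [hms, hπ]
    simp [Equiv.trans_apply]
  have hlam_bm : lam (fun r => β r + ms r)
      = List.zipWith (· + ·) (lam β) (lam (muFn d)) := by
    have hmono : ∀ i j : Fin n, i < j →
        (fun r => β r + ms r) (σβ j) ≤ (fun r => β r + ms r) (σβ i) := by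
      intro i j hij
      have h1 : β (σβ j) ≤ β (σβ i) := ordR_ge (hσβ i j hij)
      have h2 : ms (σβ j) ≤ ms (σβ i) := by
        rw [hms]
        simp only [Equiv.symm_apply_apply]
        exact mu_tau_anti d i j hij.le
      exact Nat.add_le_add h1 h2
    rw [lam_eq_ofFn _ σβ hmono, lam_eq_ofFn β σβ (fun i j hij => ordR_ge (hσβ i j hij)),
      lam_mu_eq, ofFn_zipWith]
    congr 1
    funext i
    simp [hms, Function.comp]
  have hlt2 : List.Lex (· < ·) (List.zipWith (· + ·) (lam β) (lam (muFn d))) (lam d) := by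
    rw [lam_d_zip d]
    refine lex_zipWith ?_ ?_ hβ <;> rw [lam_length, lam_length]
  rcases engine hconc π with h | h
  · have heq : (fun r => muFn d (σ' r)) = ms := heπ.symm.trans h
    unfold monLT
    have hfe : (fun r => β r + muFn d (σ' r)) = fun r => β r + ms r := by
      funext r
      rw [congrFun heq r]
    rw [hfe, hlam_bm]
    exact hlt2
  · have hts : monLTts (fun r => β r + muFn d (σ' r)) (fun r => β r + ms r) := by
      have hfe : (fun r => β r + ms (π r)) = fun r => β r + muFn d (σ' r) := by
        funext r
        rw [congrFun heπ r]
      rwa [hfe] at h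
    unfold monLT
    rcases hts with h' | ⟨h', _⟩
    · exact lex_trans h' (by rw [hlam_bm] at *; exact hlt2)
    · unfold monLT at h'
      rw [h', hlam_bm]
      exact hlt2

lemma main_lemma (σ' : Equiv.Perm (Fin n)) :
    (fun r => muFn d (σ' r)) = muFn d ∨
      monLTts (fun r => gammaFn d r + muFn d (σ' r)) d := by
  rcases engine (conc_gamma_mu d) σ' with h | h
  · exact Or.inl h
  · right
    have hfe : (fun r => gammaFn d r + muFn d r) = d := funext fun r => gam_add_mu d r
    rwa [hfe] at h

end Final
end L42

/-- **Lemma 4.2.**  Let `d ∈ ℕ^n` with P-partition decomposition `d = γ(d) + μ(d)`.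
For any `f = x^{γ(d)} + ∑_β c_β x^β` with all `β ≺ γ(d)`, one has
`m_{μ(d)} ⬝ f = x^d + ∑_e b_e x^e` with all `e <_ts d`. -/
theorem stmt_2 (n : ℕ) (hn : 1 ≤ n) (d : Fin n → ℕ) (g : MvPolynomial (Fin n) ℤ)
    (hg : ∀ e ∈ g.support, monLT (⇑e) (gammaFn d)) :
    ∃ h : MvPolynomial (Fin n) ℤ,
      mSym ℤ (muFn d) * (monomial (toF (gammaFn d)) 1 + g)
        = monomial (toF d) 1 + h ∧
      ∀ e ∈ h.support, monLTts (⇑e) d := by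

  classical
  have toF_coe : ∀ f : Fin n → ℕ, ⇑(toF f) = f := fun f => rfl
  have toF_add : ∀ a b : Fin n → ℕ, toF a + toF b = toF (fun p => a p + b p) := by
    intro a b
    ext p
    simp [toF, Finsupp.add_apply]
  set E : Finset (Fin n → ℕ) :=
    Finset.image (fun σ : Equiv.Perm (Fin n) => muFn d ∘ σ) Finset.univ with hE
  have hμE : muFn d ∈ E := Finset.mem_image.2 ⟨1, Finset.mem_univ _, by
    funext p; simp⟩
  have hprod : mSym ℤ (muFn d) * monomial (toF (gammaFn d)) 1
      = ∑ e ∈ E, monomial (toF (gammaFn d) + toF e) 1 := by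
    unfold mSym
    rw [Finset.sum_mul]
    apply Finset.sum_congr rfl
    intro e _
    rw [monomial_mul, one_mul, add_comm (toF e) (toF (gammaFn d))]
  set h : MvPolynomial (Fin n) ℤ :=
    (∑ e ∈ E.erase (muFn d), monomial (toF (gammaFn d) + toF e) 1) + mSym ℤ (muFn d) * g
    with hh
  refine ⟨h, ?_, ?_⟩
  · have hγμ : toF (gammaFn d) + toF (muFn d) = toF d := by
      rw [toF_add]
      congr 1
      funext p
      exact L42.gam_add_mu d p
    rw [mul_add, hprod, hh, ← Finset.add_sum_erase E _ hμE, hγμ, add_assoc]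
  · intro e he
    rcases Finset.mem_union.1 (MvPolynomial.support_add he) with h1 | h1
    · -- main terms
      obtain ⟨e', he'mem, he'⟩ := Finset.mem_biUnion.1 (MvPolynomial.support_sum h1)
      have he'E : e' ∈ E := Finset.mem_of_mem_erase he'mem
      have he'ne : e' ≠ muFn d := Finset.ne_of_mem_erase he'mem
      obtain ⟨σ', _, hσ'⟩ := Finset.mem_image.1 he'E
      have hesupp : e = toF (gammaFn d) + toF e' := by
        have := MvPolynomial.support_monomial_subset he'
        simpa using this
      have hcoe : ⇑e = fun r => gammaFn d r + muFn d (σ' r) := by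
        rw [hesupp]
        funext r
        rw [Finsupp.add_apply]
        have h2 := congrFun hσ' r
        simp only [Function.comp_apply] at h2
        rw [toF_coe, toF_coe, ← h2]
      rcases L42.main_lemma d σ' with hcase | hcase
      · exact absurd (by rw [← hσ']; funext r; exact congrFun hcase r) he'ne
      · rw [hcoe]
        exact hcase
    · -- cross terms
      obtain ⟨a, ha, b, hb, hab⟩ := Finset.mem_add.1 (MvPolynomial.support_mul _ _ h1)
      obtain ⟨e', he'E, he'⟩ := Finset.mem_biUnion.1 (MvPolynomial.support_sum ha)
      obtain ⟨σ', _, hσ'⟩ := Finset.mem_image.1 he'E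
      have hasupp : a = toF e' := by
        have := MvPolynomial.support_monomial_subset he'
        simpa using this
      have hcross := L42.cross_lemma d (hg b hb) σ'
      have hcoe : ⇑e = fun r => ⇑b r + muFn d (σ' r) := by
        rw [← hab, hasupp]
        funext r
        rw [Finsupp.add_apply, toF_coe]
        have h2 := congrFun hσ' r
        simp only [Function.comp_apply] at h2
        rw [← h2]
        exact Nat.add_comm _ _
      rw [hcoe]
      exact Or.inl hcross
end
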